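/- arXiv:2503.07925 — 8 statements merged into one kernel-verified Lean document; each statement's English description precedes it below -/
import Mathlib

section
/- Let 𝕃 ⊆ ℝ be such that (𝕃, +) is a subgroup of (ℝ, +) and ℤ ⊆ 𝕃. Let A be an integer m×n matrix whose columns are a¹, …, aⁿ ∈ ℤᵐ. If every vector of 𝕃ᵐ that is a nonnegative combination of a¹, …, aⁿ can be written as a nonnegative combination of a¹, …, aⁿ with coefficients in 𝕃, then every vector of 𝕃ᵐ that is a linear combination of a¹, …, aⁿ can be written as a linear combination of a¹, …, aⁿ with coefficients in 𝕃. -/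
/-!
Write `b = ∑ cⱼ aʲ` with real `cⱼ` and pick an integer `N` with `cⱼ + N ≥ 0` for all `j`.
Then `b + N ∑ aʲ` still lies in `𝕃ᵐ`, because the columns are integral and `ℤ ⊆ 𝕃`, and it is
the conic combination `∑ (cⱼ + N) aʲ`. The cone property rewrites it as `∑ c'ⱼ aʲ` with
`c'ⱼ ∈ 𝕃`, and shifting back, `b = ∑ (c'ⱼ - N) aʲ` with `c'ⱼ - N ∈ 𝕃`.
-/

open Finset

theorem exists_int_forall_nonneg_add {ι : Type*} [Finite ι] (c : ι → ℝ) :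
    ∃ N : ℤ, ∀ j, 0 ≤ c j + N := by
  obtain ⟨M, hM⟩ := (Set.finite_range fun j => -c j).bddAbove
  refine ⟨⌈M⌉, fun j => ?_⟩
  linarith [hM (Set.mem_range_self j), Int.le_ceil M]

theorem sum_add_const_mul {ι R : Type*} [Fintype ι] [NonUnitalNonAssocSemiring R]
    (c x : ι → R) (t : R) :
    ∑ j, (c j + t) * x j = ∑ j, c j * x j + t * ∑ j, x j := by
  simp only [add_mul, sum_add_distrib, mul_sum]

/-- Every `𝕃`-generating set for a cone is an `𝕃`-generating set for a subspace:
if every vector of `𝕃ᵐ` in the conic hull of the columns `a¹, …, aⁿ` of an integer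
matrix is a conic combination with coefficients in `𝕃`, then every vector of `𝕃ᵐ`
in their linear hull is a linear combination with coefficients in `𝕃`. -/
theorem GSC_is_GSS {m n : ℕ} (𝕃 : Set ℝ)
    (hsub : ∃ H : AddSubgroup ℝ, (H : Set ℝ) = 𝕃)
    (hZ : ∀ z : ℤ, (z : ℝ) ∈ 𝕃)
    (a : Fin n → Fin m → ℤ)
    (hGSC : ∀ b : Fin m → ℝ, (∀ i, b i ∈ 𝕃) →
      (∃ c : Fin n → ℝ, (∀ j, 0 ≤ c j) ∧ ∀ i, b i = ∑ j, c j * (a j i : ℝ)) →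
      ∃ c : Fin n → ℝ, (∀ j, c j ∈ 𝕃) ∧ (∀ j, 0 ≤ c j) ∧
        ∀ i, b i = ∑ j, c j * (a j i : ℝ)) :
    ∀ b : Fin m → ℝ, (∀ i, b i ∈ 𝕃) →
      (∃ c : Fin n → ℝ, ∀ i, b i = ∑ j, c j * (a j i : ℝ)) →
      ∃ c : Fin n → ℝ, (∀ j, c j ∈ 𝕃) ∧ ∀ i, b i = ∑ j, c j * (a j i : ℝ) := by
  obtain ⟨H, rfl⟩ := hsub
  rintro b hb ⟨c, hc⟩
  obtain ⟨N, hN⟩ := exists_int_forall_nonneg_add c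
  let d : Fin m → ℝ := fun i => b i + N * ∑ j, (a j i : ℝ)
  have hdH : ∀ i, d i ∈ H := fun i =>
    H.add_mem (hb i) (by exact_mod_cast hZ (N * ∑ j, a j i))
  have hd : ∀ i, d i = ∑ j, (c j + N) * (a j i : ℝ) := fun i => by
    rw [sum_add_const_mul, ← hc i]
  obtain ⟨c', hc'H, -, hc'⟩ := hGSC d hdH ⟨_, hN, hd⟩
  refine ⟨fun j => c' j - N, fun j => H.sub_mem (hc'H j) (hZ N), fun i => ?_⟩
  have hshift := sum_add_const_mul (fun j => c' j - N) (fun j => (a j i : ℝ)) N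
  simp only [sub_add_cancel] at hshift
  linarith [hc' i]
end

section
/- Let 𝕃 ⊊ ℝ with (𝕃, +) a subgroup of (ℝ, +), let A ∈ ℤ^{m×n} and b ∈ ℤᵐ. Then exactly one of the following holds: (a) Ax = b has a solution x ∈ 𝕃ⁿ; (b) there exists u ∈ ℝᵐ such that Aᵀu ∈ ℤⁿ and bᵀu ∉ 𝕃. -/
/-- Theorem of the alternative: for a proper additive subgroup `𝕃 ⊊ ℝ`,
`A ∈ ℤ^{m×n}`, `b ∈ ℤᵐ`, exactly one of the following holds:
(a) `Ax = b` has a solution in `𝕃ⁿ`;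
(b) there is `u ∈ ℝᵐ` with `Aᵀu ∈ ℤⁿ` and `bᵀu ∉ 𝕃`. -/
theorem alternative_subgroup {m n : ℕ} (𝕃 : Set ℝ)
    (hsub : ∃ H : AddSubgroup ℝ, (H : Set ℝ) = 𝕃) (hne : 𝕃 ≠ Set.univ)
    (A : Matrix (Fin m) (Fin n) ℤ) (b : Fin m → ℤ) :
    Xor'
      (∃ x : Fin n → ℝ, (∀ j, x j ∈ 𝕃) ∧ ∀ i, ∑ j, (A i j : ℝ) * x j = (b i : ℝ))
      (∃ u : Fin m → ℝ, (∀ j, ∃ z : ℤ, ∑ i, u i * (A i j : ℝ) = (z : ℝ)) ∧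
        ∑ i, (b i : ℝ) * u i ∉ 𝕃) := by
  classical
  obtain ⟨H, rfl⟩ := hsub
  -- incompatibility: (a) and (b) cannot both hold
  have key : ∀ x : Fin n → ℝ, (∀ j, x j ∈ (H : Set ℝ)) →
      (∀ i, ∑ j, (A i j : ℝ) * x j = (b i : ℝ)) →
      ∀ u : Fin m → ℝ, (∀ j, ∃ z : ℤ, ∑ i, u i * (A i j : ℝ) = (z : ℝ)) →
      ∑ i, (b i : ℝ) * u i ∈ (H : Set ℝ) := by
    intro x hx hAx u hu
    choose z hz using hu
    have heq : ∑ i, (b i : ℝ) * u i = ∑ j, (z j : ℝ) * x j := by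
      calc ∑ i, (b i : ℝ) * u i = ∑ i, (∑ j, (A i j : ℝ) * x j) * u i := by
            simp_rw [hAx]
        _ = ∑ i, ∑ j, u i * (A i j : ℝ) * x j := by
            refine Finset.sum_congr rfl fun i _ => ?_
            rw [Finset.sum_mul]
            exact Finset.sum_congr rfl fun j _ => by ring
        _ = ∑ j, (∑ i, u i * (A i j : ℝ)) * x j := by
            rw [Finset.sum_comm]
            exact Finset.sum_congr rfl fun j _ => by rw [Finset.sum_mul]
        _ = ∑ j, (z j : ℝ) * x j := by simp_rw [hz]
    rw [heq]
    exact AddSubgroup.sum_mem _ fun j _ => by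
      simpa [zsmul_eq_mul] using AddSubgroup.zsmul_mem H (hx j) (z j)
  -- setup: Smith normal form of the column span
  set col : Fin n → (Fin m → ℤ) := fun j i => A i j with hcol
  set N : Submodule ℤ (Fin m → ℤ) := Submodule.span ℤ (Set.range col) with hN
  obtain ⟨r, snf⟩ := N.smithNormalForm (Pi.basisFun ℤ (Fin m))
  set E := snf.bM with hE
  have hcolmem : ∀ j, col j ∈ N := fun j => Submodule.subset_span ⟨j, rfl⟩
  have hq : ∀ (v : Fin m → ℤ) (i : Fin m),
      (∑ t, E.repr ((Pi.basisFun ℤ (Fin m)) t) i * v t) = E.repr v i := by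
    intro v i
    have hv : v = ∑ t, v t • (Pi.basisFun ℤ (Fin m)) t := by
      conv_lhs => rw [← (Pi.basisFun ℤ (Fin m)).sum_repr v]
      simp [Pi.basisFun_repr]
    conv_rhs => rw [hv]
    rw [map_sum, Finset.sum_apply']
    refine Finset.sum_congr rfl fun t _ => ?_
    rw [map_smul, Finsupp.smul_apply, smul_eq_mul, mul_comm]
  have ha : ∀ k, snf.a k ≠ 0 := by
    intro k hk
    have h0 : (snf.bN k : Fin m → ℤ) = 0 := by rw [snf.snf k, hk, zero_smul]
    have : (snf.bN k : Fin m → ℤ) ≠ 0 := by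
      simpa [Submodule.coe_eq_zero] using snf.bN.ne_zero k
    exact this h0
  have hdvd : ∀ v (hv : v ∈ N) (k : Fin r),
      E.repr v (snf.f k) = snf.a k * snf.bN.repr ⟨v, hv⟩ k := by
    intro v hv k
    have := snf.repr_apply_embedding_eq_repr_smul (m := ⟨v, hv⟩) (i := k)
    rw [this, map_smul]
    simp
  have hzero : ∀ v (hv : v ∈ N) (i : Fin m), i ∉ Set.range snf.f → E.repr v i = 0 :=
    fun v hv i hi => snf.repr_eq_zero_of_notMem_range ⟨v, hv⟩ hi
  set c : Fin m → ℤ := fun i => E.repr b i with hc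
  by_cases Hgood : (∀ k, ∃ l ∈ (H : Set ℝ), ((c (snf.f k) : ℝ)) = (snf.a k : ℝ) * l) ∧
      (∀ i, i ∉ Set.range snf.f → c i = 0)
  · -- case (a) holds
    obtain ⟨H1, H2⟩ := Hgood
    choose l hl hcl using H1
    have hY : ∀ k, ∃ y : Fin n → ℤ, ∑ j, y j • col j = (snf.bN k : Fin m → ℤ) := by
      intro k
      have h1 : (snf.bN k : Fin m → ℤ) ∈ Submodule.span ℤ (Set.range col) := by
        rw [← hN]; exact (snf.bN k).2
      exact (Submodule.mem_span_range_iff_exists_fun ℤ).mp h1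
    choose y hy using hY
    set x : Fin n → ℝ := fun j => ∑ k, (y k j : ℝ) * l k with hxdef
    have hx : ∀ j, x j ∈ (H : Set ℝ) := fun j =>
      AddSubgroup.sum_mem _ fun k _ => by
        simpa [zsmul_eq_mul] using AddSubgroup.zsmul_mem H (hl k) (y k j)
    have hAx : ∀ i, ∑ j, (A i j : ℝ) * x j = (b i : ℝ) := by
      intro i
      have hbNi : ∀ k, ((snf.bN k : Fin m → ℤ) i : ℝ) = (snf.a k : ℝ) * (E (snf.f k) i : ℝ) := by
        intro k
        rw [snf.snf k]
        push_cast [Pi.smul_apply, smul_eq_mul]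
        ring
      have hyA : ∀ k, (∑ j, (y k j : ℝ) * (A i j : ℝ)) = ((snf.bN k : Fin m → ℤ) i : ℝ) := by
        intro k
        have h1 : (∑ j, y k j * A i j) = (snf.bN k : Fin m → ℤ) i := by
          have := congrFun (hy k) i
          simpa [Finset.sum_apply, hcol] using this
        exact_mod_cast congrArg (fun t : ℤ => (t : ℝ)) h1
      calc ∑ j, (A i j : ℝ) * x j
          = ∑ j, ∑ k, (y k j : ℝ) * (A i j : ℝ) * l k := by
            refine Finset.sum_congr rfl fun j _ => ?_
            rw [hxdef, Finset.mul_sum]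
            exact Finset.sum_congr rfl fun k _ => by ring
        _ = ∑ k, (∑ j, (y k j : ℝ) * (A i j : ℝ)) * l k := by
            rw [Finset.sum_comm]
            exact Finset.sum_congr rfl fun k _ => by rw [Finset.sum_mul]
        _ = ∑ k, ((c (snf.f k) : ℤ) : ℝ) * (E (snf.f k) i : ℝ) := by
            refine Finset.sum_congr rfl fun k _ => ?_
            rw [hyA k, hbNi k, hcl k]
            ring
        _ = (b i : ℝ) := by
            have hb1 : b i = ∑ i', c i' * E i' i := by
              conv_lhs => rw [← E.sum_repr b]
              rw [Finset.sum_apply]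
              exact Finset.sum_congr rfl fun i' _ => by
                rw [Pi.smul_apply, smul_eq_mul]
            have himg : ∑ i' ∈ Finset.univ.image snf.f, c i' * E i' i
                = ∑ k, c (snf.f k) * E (snf.f k) i :=
              Finset.sum_image (fun p _ q _ h => snf.f.injective h)
            have hb2 : ∑ i', c i' * E i' i = ∑ k, c (snf.f k) * E (snf.f k) i := by
              rw [← himg]
              refine (Finset.sum_subset (Finset.subset_univ _) fun i' _ hi' => ?_).symm
              have hnr : i' ∉ Set.range snf.f := by
                rintro ⟨k, hk⟩
                exact hi' (Finset.mem_image.mpr ⟨k, Finset.mem_univ k, hk⟩)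
              rw [H2 i' hnr, zero_mul]
            rw [hb1, hb2]
            push_cast
            rfl
    refine Or.inl ⟨⟨x, hx, hAx⟩, ?_⟩
    rintro ⟨u, hu, hnot⟩
    exact hnot (key x hx hAx u hu)
  · -- case (b) holds
    rcases not_and_or.mp Hgood with h | h
    · push_neg at h
      obtain ⟨k, hk⟩ := h
      set u : Fin m → ℝ :=
        fun t => (E.repr ((Pi.basisFun ℤ (Fin m)) t) (snf.f k) : ℝ) / (snf.a k : ℝ) with hu
      have hak : (snf.a k : ℝ) ≠ 0 := Int.cast_ne_zero.mpr (ha k)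
      have husum : ∀ v : Fin m → ℤ,
          ∑ i, u i * (v i : ℝ) = (E.repr v (snf.f k) : ℝ) / (snf.a k : ℝ) := by
        intro v
        rw [← hq v (snf.f k)]
        push_cast
        rw [Finset.sum_div]
        exact Finset.sum_congr rfl fun i _ => by rw [hu]; ring
      have hub : ∀ j, ∃ z : ℤ, ∑ i, u i * (A i j : ℝ) = (z : ℝ) := by
        intro j
        refine ⟨snf.bN.repr ⟨col j, hcolmem j⟩ k, ?_⟩
        have h3 := husum (col j)
        rw [hdvd (col j) (hcolmem j) k] at h3
        have h4 : (∑ i, u i * ((col j) i : ℝ)) = ∑ i, u i * (A i j : ℝ) := rfl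
        rw [← h4, h3]
        push_cast
        rw [mul_comm ((snf.a k : ℝ))]
        field_simp
      have hbu : ∑ i, (b i : ℝ) * u i = (c (snf.f k) : ℝ) / (snf.a k : ℝ) := by
        rw [← husum b]
        exact Finset.sum_congr rfl fun i _ => by ring
      have hnmem : ∑ i, (b i : ℝ) * u i ∉ (H : Set ℝ) := by
        rw [hbu]
        intro hmem
        exact hk _ hmem (by field_simp)
      refine Or.inr ⟨⟨u, hub, hnmem⟩, ?_⟩
      rintro ⟨x, hx, hAx⟩
      exact hnmem (key x hx hAx u hub)
    · push_neg at h
      obtain ⟨i0, hi0, hci0⟩ := h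
      obtain ⟨s, hs⟩ : ∃ s, s ∉ (H : Set ℝ) := by
        by_contra h'
        push_neg at h'
        exact hne (Set.eq_univ_of_forall h')
      set u : Fin m → ℝ :=
        fun t => s / (c i0 : ℝ) * (E.repr ((Pi.basisFun ℤ (Fin m)) t) i0 : ℝ) with hu
      have hci0' : (c i0 : ℝ) ≠ 0 := Int.cast_ne_zero.mpr hci0
      have husum : ∀ v : Fin m → ℤ,
          ∑ i, u i * (v i : ℝ) = s / (c i0 : ℝ) * (E.repr v i0 : ℝ) := by
        intro v
        rw [← hq v i0]
        push_cast
        rw [Finset.mul_sum]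
        exact Finset.sum_congr rfl fun i _ => by rw [hu]; ring
      have hub : ∀ j, ∃ z : ℤ, ∑ i, u i * (A i j : ℝ) = (z : ℝ) := by
        intro j
        refine ⟨0, ?_⟩
        have h4 : (∑ i, u i * ((col j) i : ℝ)) = ∑ i, u i * (A i j : ℝ) := rfl
        rw [← h4, husum (col j), hzero (col j) (hcolmem j) i0 hi0]
        simp
      have hbu : ∑ i, (b i : ℝ) * u i = s := by
        have h2 : ∑ i, (b i : ℝ) * u i = ∑ i, u i * (b i : ℝ) :=
          Finset.sum_congr rfl fun i _ => by ring
        rw [h2, husum b]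
        have : (E.repr b i0 : ℝ) = (c i0 : ℝ) := by rw [hc]
        rw [this]
        field_simp
      have hnmem : ∑ i, (b i : ℝ) * u i ∉ (H : Set ℝ) := by rw [hbu]; exact hs
      refine Or.inr ⟨⟨u, hub, hnmem⟩, ?_⟩
      rintro ⟨x, hx, hAx⟩
      exact hnmem (key x hx hAx u hub)
end

section
/- Let P = {x ∈ ℝⁿ : Mx ≤ b} be a polyhedron and let F be a nonempty face of P. Then the recession cone of F equals the set {x : Mx ≤ 0, rowᵢ(M)x = 0 for all i ∈ I}, where I is the index set of constraints of Mx ≤ b that are tight on all of F; in particular rec(F) is a face of rec(P). -/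
open Finset

/-!
Write `F` as the set of maximizers of `c` over `P`. Rays in `F` force `Md ≤ 0` and `Mᵢd = 0`
for every constraint `i` tight on `F`. Conversely, let `d` satisfy these. Averaging points of `F`
that witness the slackness of each non-tight constraint gives `w ∈ F` whose active constraints are
exactly the tight ones; so `-d` is a feasible direction at `w`, and maximality of `c` at `w` gives
`c ⬝ d ≥ 0`. A direction of `P` along which `c` does not decrease is a direction of `F`.
Finally, `{d | Md ≤ 0, Mᵢd = 0 (i ∈ I)}` is the face of the cone `{d | Md ≤ 0}` on which
`∑_{i ∈ I} Mᵢ` is maximal.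
-/

/-- `F` is a face of `S`: the set of maximizers of some linear functional over `S`
(this includes `S` itself, via the zero functional). -/
def IsFaceOf {n : ℕ} (S F : Set (Fin n → ℝ)) : Prop :=
  ∃ c : Fin n → ℝ, F = {x ∈ S | ∀ y ∈ S, ∑ j, c j * y j ≤ ∑ j, c j * x j}

/-- Recession cone of a set. -/
def recCone {n : ℕ} (S : Set (Fin n → ℝ)) : Set (Fin n → ℝ) :=
  {d | ∀ x ∈ S, ∀ t : ℝ, 0 ≤ t → x + t • d ∈ S}

theorem exists_forall_lt_of_forall_exists_lt {E ι : Type*} [AddCommGroup E] [Module ℝ E]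
    {F : Set E} (hne : F.Nonempty) {f : ι → E → ℝ} {b : ι → ℝ} (s : Finset ι)
    (hf : ∀ i ∈ s, ConvexOn ℝ F (f i)) (hle : ∀ i ∈ s, ∀ x ∈ F, f i x ≤ b i)
    (hlt : ∀ i ∈ s, ∃ y ∈ F, f i y < b i) : ∃ w ∈ F, ∀ i ∈ s, f i w < b i := by
  classical
  induction s using Finset.induction_on with
  | empty => simpa [Set.Nonempty] using hne
  | insert i s _ ih =>
    obtain ⟨w, hwF, hw⟩ := ih (fun j hj => hf j (mem_insert_of_mem hj))
      (fun j hj => hle j (mem_insert_of_mem hj)) (fun j hj => hlt j (mem_insert_of_mem hj))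
    obtain ⟨y, hyF, hy⟩ := hlt i (mem_insert_self i s)
    have hhalf : (1 / 2 : ℝ) + 1 / 2 = 1 := by norm_num
    refine ⟨(1 / 2 : ℝ) • w + (1 / 2 : ℝ) • y,
      (hf i (mem_insert_self i s)).1 hwF hyF (by norm_num) (by norm_num) hhalf, fun j hj => ?_⟩
    have hslack : f j w < b j ∨ f j y < b j := by
      rcases mem_insert.1 hj with rfl | hj
      exacts [Or.inr hy, Or.inl (hw j hj)]
    have hmid := (hf j hj).2 hwF hyF (by norm_num) (by norm_num) hhalf
    have hwj := hle j hj w hwF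
    have hyj := hle j hj y hyF
    simp only [smul_eq_mul] at hmid
    rcases hslack with h | h <;> linarith

theorem nonpos_of_forall_add_mul_le {a s B : ℝ} (h : ∀ t : ℝ, 0 ≤ t → a + t * s ≤ B) : s ≤ 0 := by
  by_contra! hs
  have := h ((|B - a| + 1) / s) (by positivity)
  rw [div_mul_cancel₀ _ hs.ne'] at this
  linarith [le_abs_self (B - a)]

section Polyhedra

variable {n : ℕ} {ι : Type*}

def polyhedron (a : ι → Fin n → ℝ) (β : ι → ℝ) : Set (Fin n → ℝ) :=
  {x | ∀ i, a i ⬝ᵥ x ≤ β i}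

def exposedFace (S : Set (Fin n → ℝ)) (c : Fin n → ℝ) : Set (Fin n → ℝ) :=
  {x ∈ S | ∀ y ∈ S, c ⬝ᵥ y ≤ c ⬝ᵥ x}

theorem exposedFace_subset (S : Set (Fin n → ℝ)) (c : Fin n → ℝ) : exposedFace S c ⊆ S :=
  Set.sep_subset _ _

theorem convex_polyhedron (a : ι → Fin n → ℝ) (β : ι → ℝ) : Convex ℝ (polyhedron a β) := by
  simp only [polyhedron, Set.ofPred_forall]
  exact convex_iInter fun i => convex_halfSpace_le (dotProductBilin ℝ ℝ (a i)).isLinear (β i)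

theorem Convex.exposedFace {S : Set (Fin n → ℝ)} (hS : Convex ℝ S) (c : Fin n → ℝ) :
    Convex ℝ (exposedFace S c) := by
  refine fun x hx y hy s t hs ht hst => ⟨hS hx.1 hy.1 hs ht hst, fun z hz => ?_⟩
  rw [dotProduct_add, dotProduct_smul, dotProduct_smul, smul_eq_mul, smul_eq_mul]
  calc c ⬝ᵥ z = s * c ⬝ᵥ z + t * c ⬝ᵥ z := by rw [← add_mul, hst, one_mul]
    _ ≤ s * c ⬝ᵥ x + t * c ⬝ᵥ y := by gcongr; exacts [hx.2 z hz, hy.2 z hz]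

theorem dotProduct_nonpos_of_forall_add_smul_le {a x d : Fin n → ℝ} {β : ℝ}
    (h : ∀ t : ℝ, 0 ≤ t → a ⬝ᵥ (x + t • d) ≤ β) : a ⬝ᵥ d ≤ 0 :=
  nonpos_of_forall_add_mul_le fun t ht => by
    simpa only [dotProduct_add, dotProduct_smul, smul_eq_mul] using h t ht

theorem recCone_polyhedron {a : ι → Fin n → ℝ} {β : ι → ℝ} (hne : (polyhedron a β).Nonempty) :
    recCone (polyhedron a β) = polyhedron a 0 := by
  obtain ⟨x₀, hx₀⟩ := hne
  ext d
  refine ⟨fun hd i => dotProduct_nonpos_of_forall_add_smul_le fun t ht => hd x₀ hx₀ t ht i,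
    fun hd x hx t ht i => ?_⟩
  rw [dotProduct_add, dotProduct_smul, smul_eq_mul]
  linarith [hx i, mul_nonpos_of_nonneg_of_nonpos ht (hd i)]

theorem recCone_subset_of_subset_polyhedron {a : ι → Fin n → ℝ} {β : ι → ℝ}
    {F : Set (Fin n → ℝ)} (hne : F.Nonempty) (hF : F ⊆ polyhedron a β) :
    recCone F ⊆ {d | d ∈ polyhedron a 0 ∧ ∀ i, (∀ x ∈ F, a i ⬝ᵥ x = β i) → a i ⬝ᵥ d = 0} := by
  obtain ⟨x₀, hx₀⟩ := hne
  refine fun d hd => ⟨fun i => dotProduct_nonpos_of_forall_add_smul_le fun t ht =>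
    hF (hd x₀ hx₀ t ht) i, fun i htight => ?_⟩
  have h := htight _ (hd x₀ hx₀ 1 zero_le_one)
  rw [one_smul, dotProduct_add, htight x₀ hx₀] at h
  linarith

theorem mem_recCone_exposedFace {S : Set (Fin n → ℝ)} {c d : Fin n → ℝ} (hd : d ∈ recCone S)
    (hcd : 0 ≤ c ⬝ᵥ d) : d ∈ recCone (exposedFace S c) := by
  refine fun x hx t ht => ⟨hd x hx.1 t ht, fun y hy => ?_⟩
  rw [dotProduct_add, dotProduct_smul, smul_eq_mul]
  linarith [hx.2 y hy, mul_nonneg ht hcd]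

theorem exists_pos_add_smul_mem_polyhedron [Finite ι] {a : ι → Fin n → ℝ} {β : ι → ℝ}
    {w d : Fin n → ℝ} (hw : w ∈ polyhedron a β) (hd : ∀ i, a i ⬝ᵥ w = β i → a i ⬝ᵥ d ≤ 0) :
    ∃ ε : ℝ, 0 < ε ∧ w + ε • d ∈ polyhedron a β := by
  simp only [polyhedron, Set.mem_ofPred_eq, dotProduct_add, dotProduct_smul, smul_eq_mul]
  suffices h : ∀ᶠ ε in nhdsWithin (0 : ℝ) (Set.Ioi 0), ∀ i, a i ⬝ᵥ w + ε * a i ⬝ᵥ d ≤ β i from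
    (h.and self_mem_nhdsWithin).exists.imp fun ε h => ⟨h.2, h.1⟩
  refine Filter.eventually_all.2 fun i => ?_
  rcases (hw i).eq_or_lt with hact | hlt
  · refine eventually_nhdsWithin_of_forall fun ε (hε : 0 < ε) => ?_
    linarith [mul_nonpos_of_nonneg_of_nonpos hε.le (hd i hact)]
  · refine nhdsWithin_le_nhds ?_
    have hcont : Continuous fun ε : ℝ => a i ⬝ᵥ w + ε * a i ⬝ᵥ d := by fun_prop
    exact (hcont.tendsto' 0 _ (by simp)).eventually (eventually_le_nhds hlt)

theorem dotProduct_nonpos_of_mem_exposedFace_polyhedron [Finite ι] {a : ι → Fin n → ℝ}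
    {β : ι → ℝ} {c w e : Fin n → ℝ} (hw : w ∈ exposedFace (polyhedron a β) c)
    (he : ∀ i, a i ⬝ᵥ w = β i → a i ⬝ᵥ e ≤ 0) : c ⬝ᵥ e ≤ 0 := by
  obtain ⟨ε, hε, hwe⟩ := exists_pos_add_smul_mem_polyhedron hw.1 he
  have := hw.2 _ hwe
  rw [dotProduct_add, dotProduct_smul, smul_eq_mul] at this
  exact nonpos_of_mul_nonpos_right (by linarith) hε

theorem exists_forall_active_imp_tight [Fintype ι] {a : ι → Fin n → ℝ} {β : ι → ℝ}
    {F : Set (Fin n → ℝ)} (hF : Convex ℝ F) (hne : F.Nonempty) (hFP : F ⊆ polyhedron a β) :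
    ∃ w ∈ F, ∀ i, a i ⬝ᵥ w = β i → ∀ x ∈ F, a i ⬝ᵥ x = β i := by
  classical
  obtain ⟨w, hwF, hw⟩ := exists_forall_lt_of_forall_exists_lt hne
    (univ.filter fun i => ¬∀ x ∈ F, a i ⬝ᵥ x = β i)
    (fun i _ => (dotProductBilin ℝ ℝ (a i)).convexOn hF) (fun i _ x hx => hFP hx i)
    fun i hi => by
      push Not at hi
      obtain ⟨x, hxF, hx⟩ := (mem_filter.1 hi).2
      exact ⟨x, hxF, (hFP hxF i).lt_of_ne hx⟩
  refine ⟨w, hwF, fun i hact => ?_⟩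
  by_contra hi
  exact (hw i (mem_filter.2 ⟨mem_univ i, hi⟩)).ne hact

theorem dotProduct_nonneg_of_forall_tight [Fintype ι] {a : ι → Fin n → ℝ} {β : ι → ℝ}
    {c d : Fin n → ℝ} (hne : (exposedFace (polyhedron a β) c).Nonempty)
    (hd : ∀ i, (∀ x ∈ exposedFace (polyhedron a β) c, a i ⬝ᵥ x = β i) → a i ⬝ᵥ d = 0) :
    0 ≤ c ⬝ᵥ d := by
  obtain ⟨w, hw, hwtight⟩ := exists_forall_active_imp_tight
    ((convex_polyhedron a β).exposedFace c) hne (exposedFace_subset _ _)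
  have := dotProduct_nonpos_of_mem_exposedFace_polyhedron hw (e := -d) fun i hact => by
    rw [dotProduct_neg, hd i (hwtight i hact), neg_zero]
  simpa using this

theorem isFaceOf_polyhedron_zero_inter [Fintype ι] (a : ι → Fin n → ℝ) (I : Set ι) :
    IsFaceOf (polyhedron a 0) {d | d ∈ polyhedron a 0 ∧ ∀ i ∈ I, a i ⬝ᵥ d = 0} := by
  classical
  set s := univ.filter (· ∈ I)
  have hsum (y : Fin n → ℝ) : (∑ i ∈ s, a i) ⬝ᵥ y = ∑ i ∈ s, a i ⬝ᵥ y := sum_dotProduct _ _ _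
  have hnonpos (y) (hy : y ∈ polyhedron a 0) : ∑ i ∈ s, a i ⬝ᵥ y ≤ 0 := sum_nonpos fun i _ => hy i
  refine ⟨∑ i ∈ s, a i, Set.ext fun d => and_congr_right fun hd => ?_⟩
  change _ ↔ ∀ y ∈ polyhedron a 0, (∑ i ∈ s, a i) ⬝ᵥ y ≤ (∑ i ∈ s, a i) ⬝ᵥ d
  simp only [hsum]
  constructor
  · intro hdI y hy
    rw [sum_eq_zero fun i hi => hdI i (mem_filter.1 hi).2]
    exact hnonpos y hy
  · intro hmax i hi
    have h0 := hmax 0 fun i => by simp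
    simp only [dotProduct_zero, sum_const_zero] at h0
    exact (sum_eq_zero_iff_of_nonpos fun i _ => hd i).1 ((hnonpos d hd).antisymm h0) i
      (mem_filter.2 ⟨mem_univ i, hi⟩)

end Polyhedra

/-- For a nonempty face `F` of the polyhedron `P = {x : Mx ≤ b}`, the recession cone
of `F` is `{d : Md ≤ 0, rowᵢ(M)d = 0 (i ∈ I)}` where `I` indexes the constraints
tight on all of `F`; in particular, `rec(F)` is a face of `rec(P)`. -/
theorem recCone_face {m n : ℕ} (M : Matrix (Fin m) (Fin n) ℝ) (b : Fin m → ℝ)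
    (P : Set (Fin n → ℝ)) (hP : P = {x | ∀ i, ∑ j, M i j * x j ≤ b i})
    (F : Set (Fin n → ℝ)) (hF : IsFaceOf P F) (hFne : F.Nonempty)
    (I : Set (Fin m)) (hI : I = {i | ∀ x ∈ F, ∑ j, M i j * x j = b i}) :
    recCone F =
      {d | (∀ i, ∑ j, M i j * d j ≤ 0) ∧ ∀ i ∈ I, ∑ j, M i j * d j = 0} ∧
    IsFaceOf (recCone P) (recCone F) := by
  obtain ⟨c, hc⟩ := hF
  replace hc : F = exposedFace P c := hc
  replace hP : P = polyhedron M b := hP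
  subst hI hc hP
  have hrecP := recCone_polyhedron (hFne.mono (exposedFace_subset _ _))
  have hrecF : recCone (exposedFace (polyhedron M b) c) = {d | d ∈ polyhedron M 0 ∧
      ∀ i, (∀ x ∈ exposedFace (polyhedron M b) c, M i ⬝ᵥ x = b i) → M i ⬝ᵥ d = 0} :=
    (recCone_subset_of_subset_polyhedron hFne (exposedFace_subset _ _)).antisymm fun d hd =>
      mem_recCone_exposedFace (hrecP.ge hd.1) (dotProduct_nonneg_of_forall_tight hFne hd.2)
  refine ⟨hrecF, ?_⟩
  rw [hrecF, hrecP]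
  exact isFaceOf_polyhedron_zero_inter M _
end

section
/- Let M ∈ ℝ^{m×n}, b ∈ ℝᵐ, w ∈ ℝⁿ, and let F be a nonempty face of Q = {x : Mx ≤ b}. Then F is contained in the set of optimal solutions of max{wᵀx : Mx ≤ b} if and only if w lies in the conic hull of {rowᵢ(M) : i ∈ I(F)}, where I(F) is the set of indices of constraints tight on all of F. -/
open scoped RealInnerProductSpace
open Finset

private lemma sum_smul_apply {n m : ℕ} (s : Finset (Fin m)) (y : Fin m → ℝ)
    (v : Fin m → EuclideanSpace ℝ (Fin n)) (j : Fin n) :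
    (∑ i ∈ s, y i • v i) j = ∑ i ∈ s, y i * v i j := by
  induction s using Finset.induction with
  | empty => simp
  | insert _ _ h ih => rw [Finset.sum_insert h, Finset.sum_insert h, ← ih]; rfl

private lemma sum_extend {n m : ℕ} {t s : Finset (Fin m)} (hts : t ⊆ s) (c : {i // i ∈ t} → ℝ)
    (f : Fin m → EuclideanSpace ℝ (Fin n)) :
    ∑ i : {i // i ∈ t}, c i • f i
      = ∑ i ∈ s, (if h : i ∈ t then c ⟨i, h⟩ else 0) • f i := by
  classical
  rw [← Finset.sum_subset hts (fun i _ hit => by simp [hit])]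
  rw [← Finset.sum_attach t (fun i => (if h : i ∈ t then c ⟨i, h⟩ else 0) • f i)]
  exact Finset.sum_congr rfl fun i _ => by simp [i.2]

/-- Carathéodory for finitely generated cones. -/
private lemma cone_carath {n m : ℕ} (v : Fin m → EuclideanSpace ℝ (Fin n)) :
    ∀ (t : Finset (Fin m)) (x : EuclideanSpace ℝ (Fin n)),
      (∃ y : Fin m → ℝ, (∀ i, 0 ≤ y i) ∧ x = ∑ i ∈ t, y i • v i) →
      ∃ t', t' ⊆ t ∧ LinearIndependent ℝ (fun i : t' => v i) ∧
        ∃ y : Fin m → ℝ, (∀ i, 0 ≤ y i) ∧ x = ∑ i ∈ t', y i • v i := by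
  classical
  intro t
  induction t using Finset.strongInduction with
  | _ t ih =>
    intro x hx
    by_cases hli : LinearIndependent ℝ (fun i : t => v i)
    · exact ⟨t, subset_rfl, hli, hx⟩
    · obtain ⟨y, hy0, hxy⟩ := hx
      obtain ⟨g, hg, i₀, hgi₀⟩ := Fintype.not_linearIndependent_iff.mp hli
      set G₀ : Fin m → ℝ := fun i => if h : i ∈ t then g ⟨i, h⟩ else 0 with hGdef
      have hG₀sum : ∑ i ∈ t, G₀ i • v i = 0 := by
        rw [← hg, ← Finset.sum_attach t (fun i => G₀ i • v i)]
        refine Finset.sum_congr rfl fun i _ => ?_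
        simp [hGdef, i.2]
      have key : ∀ G : Fin m → ℝ, (∑ i ∈ t, G i • v i = 0) →
          (∃ j ∈ t, 0 < G j) →
          ∃ t', t' ⊆ t ∧ LinearIndependent ℝ (fun i : t' => v i) ∧
            ∃ y : Fin m → ℝ, (∀ i, 0 ≤ y i) ∧ x = ∑ i ∈ t', y i • v i := by
        rintro G hGsum ⟨j₀, hj₀t, hj₀⟩
        set T : Finset (Fin m) := t.filter (fun i => 0 < G i) with hT
        have hTne : T.Nonempty := ⟨j₀, Finset.mem_filter.mpr ⟨hj₀t, hj₀⟩⟩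
        set τ : ℝ := T.inf' hTne (fun i => y i / G i) with hτ
        obtain ⟨i₁, hi₁T, hi₁⟩ := Finset.exists_mem_eq_inf' hTne (fun i => y i / G i)
        have hi₁t : i₁ ∈ t := (Finset.mem_filter.mp hi₁T).1
        have hGi₁ : 0 < G i₁ := (Finset.mem_filter.mp hi₁T).2
        have hτ0 : 0 ≤ τ := by
          rw [hτ, hi₁]; exact div_nonneg (hy0 i₁) hGi₁.le
        set y' : Fin m → ℝ := fun i => if i ∈ t then y i - τ * G i else 0 with hy'
        have hy'0 : ∀ i, 0 ≤ y' i := by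
          intro i
          rw [hy']
          by_cases hit : i ∈ t
          · simp only [hit, if_true, sub_nonneg]
            by_cases hGi : 0 < G i
            · have hle : τ ≤ y i / G i := Finset.inf'_le _ (Finset.mem_filter.mpr ⟨hit, hGi⟩)
              calc τ * G i ≤ (y i / G i) * G i := mul_le_mul_of_nonneg_right hle hGi.le
                _ = y i := div_mul_cancel₀ _ (ne_of_gt hGi)
            · push_neg at hGi
              exact le_trans (mul_nonpos_of_nonneg_of_nonpos hτ0 hGi) (hy0 i)
          · simp [hit]
        have hy'i₁ : y' i₁ = 0 := by
          rw [hy']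
          simp only [hi₁t, if_true]
          rw [hτ, hi₁, div_mul_cancel₀ _ (ne_of_gt hGi₁), sub_self]
        have hxsum : x = ∑ i ∈ t.erase i₁, y' i • v i := by
          have h1 : x = ∑ i ∈ t, y' i • v i := by
            rw [hxy]
            have h2 : ∑ i ∈ t, y' i • v i = ∑ i ∈ t, (y i • v i - τ • (G i • v i)) := by
              refine Finset.sum_congr rfl fun i hit => ?_
              rw [hy']
              simp only [hit, if_true, sub_smul, smul_smul]
            rw [h2, Finset.sum_sub_distrib, ← Finset.smul_sum, hGsum, smul_zero, sub_zero]
          rw [h1, ← Finset.add_sum_erase t _ hi₁t, hy'i₁, zero_smul, zero_add]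
        obtain ⟨t', ht'sub, ht'li, hrest⟩ :=
          ih (t.erase i₁) (Finset.erase_ssubset hi₁t) x ⟨y', hy'0, hxsum⟩
        exact ⟨t', ht'sub.trans (Finset.erase_subset _ _), ht'li, hrest⟩
      rcases hgi₀.lt_or_gt with hneg | hpos
      · refine key (-G₀) ?_ ⟨i₀, i₀.2, ?_⟩
        · rw [← neg_zero, ← hG₀sum, ← Finset.sum_neg_distrib]
          exact Finset.sum_congr rfl fun i _ => by rw [Pi.neg_apply, neg_smul]
        · simp only [Pi.neg_apply, hGdef, dif_pos i₀.2]
          simpa using hneg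
      · refine key G₀ hG₀sum ⟨i₀, i₀.2, ?_⟩
        simp only [hGdef]
        rw [dif_pos i₀.2]
        simpa using hpos

private lemma isClosed_coneSet {n m : ℕ} (v : Fin m → EuclideanSpace ℝ (Fin n))
    (s : Finset (Fin m)) :
    IsClosed {x : EuclideanSpace ℝ (Fin n) |
      ∃ y : Fin m → ℝ, (∀ i, 0 ≤ y i) ∧ x = ∑ i ∈ s, y i • v i} := by
  classical
  have hset : {x : EuclideanSpace ℝ (Fin n) |
      ∃ y : Fin m → ℝ, (∀ i, 0 ≤ y i) ∧ x = ∑ i ∈ s, y i • v i} =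
      ⋃ t : {t : Finset (Fin m) // t ⊆ s ∧ LinearIndependent ℝ (fun i : t => v i)},
        (fun c : {i // i ∈ t.1} → ℝ => ∑ i, c i • v i) '' {c | ∀ i, 0 ≤ c i} := by
    ext x
    simp only [Set.mem_setOf_eq, Set.mem_iUnion, Set.mem_image]
    constructor
    · rintro hx
      obtain ⟨t', ht's, ht'li, y, hy0, hxy⟩ := cone_carath v s x hx
      refine ⟨⟨t', ht's, ht'li⟩, fun i => y i, fun i => hy0 i, ?_⟩
      rw [hxy, ← Finset.sum_attach t' (fun i => y i • v i)]
      rfl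
    · rintro ⟨⟨t, hts, hli⟩, c, hc0, rfl⟩
      refine ⟨fun i => if h : i ∈ t then c ⟨i, h⟩ else 0, fun i => ?_, ?_⟩
      · by_cases h : i ∈ t
        · simpa [h] using hc0 ⟨i, h⟩
        · simp [h]
      · exact sum_extend hts c v
  rw [hset]
  refine isClosed_iUnion_of_finite fun t => ?_
  obtain ⟨tt, hts, hli⟩ := t
  let L : ({i // i ∈ tt} → ℝ) →ₗ[ℝ] EuclideanSpace ℝ (Fin n) :=
    { toFun := fun c => ∑ i, c i • v i
      map_add' := fun a b => by
        simp only [Pi.add_apply, add_smul, Finset.sum_add_distrib]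
      map_smul' := fun r a => by
        simp only [Pi.smul_apply, smul_eq_mul, RingHom.id_apply, Finset.smul_sum, smul_smul] }
  have hker : LinearMap.ker L = ⊥ := by
    rw [LinearMap.ker_eq_bot']
    intro c hc
    have := Fintype.linearIndependent_iff.mp hli c hc
    funext i
    exact this i
  have hemb := L.isClosedEmbedding_of_injective hker
  have horth : IsClosed {c : {i // i ∈ tt} → ℝ | ∀ i, 0 ≤ c i} := by
    have : {c : {i // i ∈ tt} → ℝ | ∀ i, 0 ≤ c i} = ⋂ i, {c | 0 ≤ c i} := by
      ext c; simp
    rw [this]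
    exact isClosed_iInter fun i => isClosed_le continuous_const (continuous_apply i)
  exact hemb.isClosedMap _ horth

/-- Farkas: if every direction `d` with `vᵢ·d ≤ 0` for `i ∈ s` satisfies `w·d ≤ 0`,
then `w` is a nonnegative combination of the `vᵢ`, `i ∈ s`. -/
private lemma farkas_pi {n m : ℕ} (v : Fin m → (Fin n → ℝ)) (s : Finset (Fin m))
    (w : Fin n → ℝ)
    (h : ∀ d : Fin n → ℝ, (∀ i ∈ s, ∑ j, v i j * d j ≤ 0) → ∑ j, w j * d j ≤ 0) :
    ∃ y : Fin m → ℝ, (∀ i, 0 ≤ y i) ∧ (∀ i ∉ s, y i = 0) ∧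
      ∀ j, w j = ∑ i ∈ s, y i * v i j := by
  classical
  set V : Fin m → EuclideanSpace ℝ (Fin n) := fun i => WithLp.toLp 2 (v i) with hV
  have hinner : ∀ (a : EuclideanSpace ℝ (Fin n)) (d : EuclideanSpace ℝ (Fin n)),
      ⟪a, d⟫ = ∑ j, a j * d j := by
    intro a d
    simp [PiLp.inner_apply, RCLike.inner_apply]
    exact Finset.sum_congr rfl fun _ _ => mul_comm _ _
  by_cases hmem : (WithLp.toLp 2 w : EuclideanSpace ℝ (Fin n)) ∈ {x : EuclideanSpace ℝ (Fin n) |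
      ∃ y : Fin m → ℝ, (∀ i, 0 ≤ y i) ∧ x = ∑ i ∈ s, y i • V i}
  · obtain ⟨y, hy0, hWy⟩ := hmem
    refine ⟨fun i => if i ∈ s then y i else 0, fun i => ?_, fun i hi => by simp [hi], fun j => ?_⟩
    · by_cases hi : i ∈ s <;> simp [hi, hy0 i]
    · have h2 : w j = ∑ i ∈ s, y i * V i j := by
        have := congrArg (fun x : EuclideanSpace ℝ (Fin n) => x j) hWy
        simpa [sum_smul_apply] using this
      rw [h2]
      exact Finset.sum_congr rfl fun i hi => by simp [hi, hV]
  · exfalso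
    let K : ConvexCone ℝ (EuclideanSpace ℝ (Fin n)) :=
      { carrier := {x | ∃ y : Fin m → ℝ, (∀ i, 0 ≤ y i) ∧ x = ∑ i ∈ s, y i • V i}
        smul_mem' := by
          rintro c hc x ⟨y, hy0, rfl⟩
          exact ⟨fun i => c * y i, fun i => mul_nonneg hc.le (hy0 i), by
            rw [Finset.smul_sum]
            exact Finset.sum_congr rfl fun i _ => by rw [smul_smul]⟩
        add_mem' := by
          rintro x ⟨y₁, hy₁, rfl⟩ x' ⟨y₂, hy₂, rfl⟩
          exact ⟨fun i => y₁ i + y₂ i, fun i => add_nonneg (hy₁ i) (hy₂ i), by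
            rw [← Finset.sum_add_distrib]
            exact Finset.sum_congr rfl fun i _ => by rw [add_smul]⟩ }
    have hKne : (K : Set (EuclideanSpace ℝ (Fin n))).Nonempty :=
      ⟨0, ⟨fun _ => 0, fun i => le_refl 0, by simp⟩⟩
    have hKclosed : IsClosed (K : Set (EuclideanSpace ℝ (Fin n))) := isClosed_coneSet V s
    let C : ProperCone ℝ (EuclideanSpace ℝ (Fin n)) :=
      { carrier := (K : Set (EuclideanSpace ℝ (Fin n)))
        add_mem' := fun hx hy => K.add_mem hx hy
        zero_mem' := ⟨fun _ => 0, fun _ => le_refl 0, by simp⟩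
        smul_mem' := fun c x hx => by
          rcases eq_or_ne c 0 with hc | hc
          · rw [hc, zero_smul]; exact ⟨fun _ => 0, fun _ => le_refl 0, by simp⟩
          · change (c : ℝ) • x ∈ (K : Set (EuclideanSpace ℝ (Fin n)))
            exact K.smul_mem (NNReal.coe_pos.mpr (pos_iff_ne_zero.mpr hc)) hx
        isClosed' := hKclosed }
    obtain ⟨z, hz1, hz2⟩ := C.hyperplane_separation' (x₀ := WithLp.toLp 2 w) hmem
    rw [real_inner_comm] at hz2
    have hd : ∀ i ∈ s, ∑ j, v i j * (-z) j ≤ 0 := by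
      intro i hi
      have hViK : V i ∈ K := by
        refine ⟨fun k => if k = i then 1 else 0, fun k => by positivity, ?_⟩
        simp [ite_smul, Finset.sum_ite_eq', hi]
      have h0 := hz1 _ hViK
      rw [hinner] at h0
      have heq : ∑ j, v i j * (-z) j = -(∑ j, V i j * z j) := by
        rw [← Finset.sum_neg_distrib]
        exact Finset.sum_congr rfl fun j _ => by simp [hV]
      rw [heq]
      linarith
    have hwd := h (-z).ofLp hd
    have heq : ∑ j, w j * (-z) j = -(∑ j, z j * w j) := by
      rw [← Finset.sum_neg_distrib]
      refine Finset.sum_congr rfl fun j _ => ?_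
      rw [show ((-z) j) = -(z j) from rfl]
      ring
    rw [heq] at hwd
    rw [hinner] at hz2
    linarith

private lemma dot_combo {n : ℕ} (c x y : Fin n → ℝ) (a b : ℝ) :
    ∑ j, c j * (a • x + b • y) j = a * ∑ j, c j * x j + b * ∑ j, c j * y j := by
  simp only [Pi.add_apply, Pi.smul_apply, smul_eq_mul, Finset.mul_sum,
    ← Finset.sum_add_distrib]
  exact Finset.sum_congr rfl fun j _ => by ring

private lemma dot_sum_smul {n m : ℕ} (a : Fin n → ℝ) (J : Finset (Fin m)) (κ : ℝ)
    (p : Fin m → Fin n → ℝ) :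
    ∑ j, a j * (∑ k ∈ J, κ • p k) j = ∑ k ∈ J, κ * (∑ j, a j * p k j) := by
  simp only [Finset.sum_apply, Pi.smul_apply, smul_eq_mul, Finset.mul_sum]
  rw [Finset.sum_comm]
  exact Finset.sum_congr rfl fun k _ => Finset.sum_congr rfl fun j _ => by ring

private lemma dot_add_mul {n : ℕ} (c x d : Fin n → ℝ) (ε : ℝ) :
    ∑ j, c j * (x j + ε * d j) = ∑ j, c j * x j + ε * ∑ j, c j * d j := by
  simp only [mul_add, Finset.sum_add_distrib, Finset.mul_sum]
  congr 1
  exact Finset.sum_congr rfl fun j _ => by ring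

private lemma dot_swap {n m : ℕ} (M : Matrix (Fin m) (Fin n) ℝ) (y : Fin m → ℝ)
    (z : Fin n → ℝ) :
    ∑ j, (∑ i, y i * M i j) * z j = ∑ i, y i * ∑ j, M i j * z j := by
  simp only [Finset.sum_mul, Finset.mul_sum]
  rw [Finset.sum_comm]
  exact Finset.sum_congr rfl fun i _ => Finset.sum_congr rfl fun j _ => by ring

/-- A nonempty face `F` of `Q = {x : Mx ≤ b}` is contained in the set of optimal
solutions of `max{wᵀx : Mx ≤ b}` iff `w` is a conic combination of the rows of `M`
tight on all of `F`. -/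
theorem face_subset_optimal_iff_conic {m n : ℕ} (M : Matrix (Fin m) (Fin n) ℝ)
    (b : Fin m → ℝ) (w : Fin n → ℝ)
    (Q : Set (Fin n → ℝ)) (hQ : Q = {x | ∀ i, ∑ j, M i j * x j ≤ b i})
    (F : Set (Fin n → ℝ))
    (hF : ∃ c : Fin n → ℝ,
      F = {x ∈ Q | ∀ y ∈ Q, ∑ j, c j * y j ≤ ∑ j, c j * x j})
    (hFne : F.Nonempty) :
    (F ⊆ {x ∈ Q | ∀ y ∈ Q, ∑ j, w j * y j ≤ ∑ j, w j * x j}) ↔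
      (∃ y : Fin m → ℝ, (∀ i, 0 ≤ y i) ∧
        (∀ i, (¬ ∀ x ∈ F, ∑ j, M i j * x j = b i) → y i = 0) ∧
        ∀ j, w j = ∑ i, y i * M i j) := by
  classical
  obtain ⟨c, hFc⟩ := hF
  have hFQ : F ⊆ Q := by rw [hFc]; exact fun x hx => hx.1
  constructor
  · -- forward direction
    intro hsub
    set I : Finset (Fin m) := Finset.univ.filter
      (fun i => ∀ x ∈ F, ∑ j, M i j * x j = b i) with hI
    -- convexity
    have hQconv : Convex ℝ Q := by
      rw [hQ]
      intro x hx y hy a a' ha ha' haa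
      intro i
      rw [dot_combo]
      calc a * ∑ j, M i j * x j + a' * ∑ j, M i j * y j
          ≤ a * b i + a' * b i :=
            add_le_add (mul_le_mul_of_nonneg_left (hx i) ha)
              (mul_le_mul_of_nonneg_left (hy i) ha')
        _ = b i := by rw [← add_mul, haa, one_mul]
    have hFconv : Convex ℝ F := by
      rw [hFc]
      intro x hx y hy a a' ha ha' haa
      refine ⟨hQconv hx.1 hy.1 ha ha' haa, fun z hz => ?_⟩
      rw [dot_combo]
      calc ∑ j, c j * z j = a * ∑ j, c j * z j + a' * ∑ j, c j * z j := by
            rw [← add_mul, haa, one_mul]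
        _ ≤ a * ∑ j, c j * x j + a' * ∑ j, c j * y j :=
            add_le_add (mul_le_mul_of_nonneg_left (hx.2 z hz) ha)
              (mul_le_mul_of_nonneg_left (hy.2 z hz) ha')
    -- a point of F with slack in all non-tight constraints
    have hslack : ∀ i, i ∉ I → ∃ x ∈ F, ∑ j, M i j * x j < b i := by
      intro i hi
      rw [hI, Finset.mem_filter] at hi
      push_neg at hi
      obtain ⟨x, hxF, hxne⟩ := hi (Finset.mem_univ i)
      have hle : ∑ j, M i j * x j ≤ b i := by
        have := hFQ hxF
        rw [hQ] at this
        exact this i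
      exact ⟨x, hxF, lt_of_le_of_ne hle hxne⟩
    obtain ⟨xb, hxbF, hxbsl⟩ : ∃ xb ∈ F, ∀ i ∉ I, ∑ j, M i j * xb j < b i := by
      set J : Finset (Fin m) := Finset.univ.filter (fun i => i ∉ I) with hJ
      by_cases hJne : J.Nonempty
      · have hch : ∀ i : Fin m, ∃ x, x ∈ F ∧ (i ∉ I → ∑ j, M i j * x j < b i) := by
          intro i
          by_cases hi : i ∈ I
          · exact ⟨hFne.choose, hFne.choose_spec, fun h => absurd hi h⟩
          · obtain ⟨x, hxF, hxlt⟩ := hslack i hi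
            exact ⟨x, hxF, fun _ => hxlt⟩
        choose p hpF hpsl using hch
        set κ : ℝ := (J.card : ℝ)⁻¹ with hκ
        have hJcard : 0 < (J.card : ℝ) := by
          exact_mod_cast Finset.card_pos.mpr hJne
        have hκ0 : 0 < κ := inv_pos.mpr hJcard
        refine ⟨∑ k ∈ J, κ • p k, ?_, ?_⟩
        · refine Convex.sum_mem hFconv (fun k _ => hκ0.le) ?_ (fun k _ => hpF k)
          rw [Finset.sum_const, nsmul_eq_mul, hκ, mul_inv_cancel₀ (ne_of_gt hJcard)]
        · intro i hiI
          rw [dot_sum_smul]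
          have hib : b i = ∑ k ∈ J, κ * b i := by
            rw [Finset.sum_const, nsmul_eq_mul, ← mul_assoc,
              mul_inv_cancel₀ (ne_of_gt hJcard), one_mul]
          rw [hib]
          refine Finset.sum_lt_sum (fun k _ => ?_) ⟨i, ?_, ?_⟩
          · refine mul_le_mul_of_nonneg_left ?_ hκ0.le
            have := hFQ (hpF k)
            rw [hQ] at this
            exact this i
          · rw [hJ, Finset.mem_filter]; exact ⟨Finset.mem_univ i, hiI⟩
          · exact mul_lt_mul_of_pos_left (hpsl i hiI) hκ0
      · rw [Finset.not_nonempty_iff_eq_empty] at hJne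
        refine ⟨hFne.choose, hFne.choose_spec, fun i hiI => ?_⟩
        exfalso
        have : i ∈ J := by rw [hJ, Finset.mem_filter]; exact ⟨Finset.mem_univ i, hiI⟩
        rw [hJne] at this
        exact absurd this (Finset.notMem_empty i)
    have hxbQ : xb ∈ Q := hFQ hxbF
    -- apply Farkas
    obtain ⟨y, hy0, hyI, hyw⟩ := farkas_pi (fun i => M i) I w (by
      intro d hd
      by_contra hpos
      push_neg at hpos
      set ci : Fin m → ℝ := fun i => ∑ j, M i j * d j with hci
      set sl : Fin m → ℝ := fun i => b i - ∑ j, M i j * xb j with hsl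
      have hslpos : ∀ i, 0 < ci i → 0 < sl i := by
        intro i hcipos
        have hiI : i ∉ I := by
          intro hiI
          have := hd i hiI
          rw [hci] at hcipos
          linarith
        simp only [hsl]
        have := hxbsl i hiI
        linarith
      set T : Finset (Fin m) := Finset.univ.filter (fun i => 0 < ci i) with hT
      set ε : ℝ := if hTne : T.Nonempty then min 1 (T.inf' hTne fun i => sl i / ci i) else 1
        with hε
      have hε0 : 0 < ε := by
        rw [hε]
        split
        · next hTne =>
          refine lt_min one_pos ?_
          rw [Finset.lt_inf'_iff]
          intro i hiT
          rw [hT, Finset.mem_filter] at hiT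
          exact div_pos (hslpos i hiT.2) hiT.2
        · exact one_pos
      have hεle : ∀ i, 0 < ci i → ε * ci i ≤ sl i := by
        intro i hcipos
        have hiT : i ∈ T := by rw [hT, Finset.mem_filter]; exact ⟨Finset.mem_univ i, hcipos⟩
        have hTne : T.Nonempty := ⟨i, hiT⟩
        have h1 : ε ≤ sl i / ci i := by
          rw [hε, dif_pos hTne]
          exact le_trans (min_le_right _ _) (Finset.inf'_le _ hiT)
        calc ε * ci i ≤ (sl i / ci i) * ci i := mul_le_mul_of_nonneg_right h1 hcipos.le
          _ = sl i := div_mul_cancel₀ _ (ne_of_gt hcipos)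
      set x' : Fin n → ℝ := fun j => xb j + ε * d j with hx'
      have hx'Q : x' ∈ Q := by
        rw [hQ]
        intro i
        rw [hx']
        rw [dot_add_mul]
        have hxbi : ∑ j, M i j * xb j ≤ b i := by rw [hQ] at hxbQ; exact hxbQ i
        by_cases hcip : 0 < ci i
        · have := hεle i hcip
          simp only [hsl, hci] at this
          linarith
        · push_neg at hcip
          have : ε * ci i ≤ 0 := mul_nonpos_of_nonneg_of_nonpos hε0.le hcip
          rw [hci] at this
          linarith
      have hopt := (hsub hxbF).2 x' hx'Q
      rw [hx', dot_add_mul] at hopt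
      nlinarith)
    refine ⟨y, hy0, fun i hnt => ?_, fun j => ?_⟩
    · refine hyI i ?_
      rw [hI, Finset.mem_filter]
      exact fun h => hnt h.2
    · rw [hyw j]
      exact Finset.sum_subset (Finset.subset_univ I)
        (fun i _ hiI => by rw [hyI i hiI, zero_mul])
  · -- backward direction
    rintro ⟨y, hy0, hytight, hwy⟩ x hxF
    have hxQ : x ∈ Q := hFQ hxF
    refine ⟨hxQ, fun z hz => ?_⟩
    have hwz : ∑ j, w j * z j = ∑ i, y i * ∑ j, M i j * z j := by
      rw [← dot_swap M y z]
      exact Finset.sum_congr rfl fun j _ => by rw [hwy j]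
    have hwx : ∑ j, w j * x j = ∑ i, y i * ∑ j, M i j * x j := by
      rw [← dot_swap M y x]
      exact Finset.sum_congr rfl fun j _ => by rw [hwy j]
    rw [hwz, hwx]
    refine Finset.sum_le_sum fun i _ => ?_
    by_cases hyi : y i = 0
    · simp [hyi]
    · have htight : ∀ x ∈ F, ∑ j, M i j * x j = b i := by
        by_contra h
        exact hyi (hytight i h)
      rw [htight x hxF]
      refine mul_le_mul_of_nonneg_left ?_ (hy0 i)
      rw [hQ] at hz
      exact hz i
end

section
/- Let max{wᵀx : Mx ≤ b} have a nonempty set F of optimal solutions, and let y be a feasible solution of the dual min{bᵀy : Mᵀy = w, y ≥ 0}. Then y is optimal for the dual if and only if yᵢ = 0 for every constraint index i not tight on all of F. Moreover, there exists an optimal dual solution y with yᵢ > 0 for every i tight on all of F. -/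
open Matrix Finset


theorem my_farkas_cone : ∀ (k : ℕ) {d : ℕ} (a : Fin k → Fin d → ℝ) (b : Fin d → ℝ),
    (¬ ∃ u : Fin k → ℝ, (∀ i, 0 ≤ u i) ∧ ∀ j, ∑ i, u i * a i j = b j) →
    ∃ y : Fin d → ℝ, (∀ i, a i ⬝ᵥ y ≤ 0) ∧ 0 < b ⬝ᵥ y := by
  intro k
  induction k with
  | zero =>
    intro d a b h
    refine ⟨b, fun i => i.elim0, ?_⟩
    have hb : b ≠ 0 := by
      rintro rfl
      exact h ⟨0, fun i => le_refl 0, fun j => by simp⟩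
    have h2 : b ⬝ᵥ b ≠ 0 := fun hc => hb (dotProduct_self_eq_zero.mp hc)
    have hnn : 0 ≤ b ⬝ᵥ b := Finset.sum_nonneg fun i _ => mul_self_nonneg _
    exact lt_of_le_of_ne hnn (Ne.symm h2)
  | succ k ih =>
    intro d a b h
    set a' : Fin k → Fin d → ℝ := fun i => a i.castSucc with ha'
    set c : Fin d → ℝ := a (Fin.last k) with hc
    have hb' : ¬ ∃ u : Fin k → ℝ, (∀ i, 0 ≤ u i) ∧ ∀ j, ∑ i, u i * a' i j = b j := by
      rintro ⟨u, hu, hsum⟩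
      refine h ⟨Fin.snoc u 0, ?_, ?_⟩
      · intro i
        refine Fin.lastCases ?_ ?_ i
        · simp
        · intro i; simpa using hu i
      · intro j
        rw [Fin.sum_univ_castSucc]
        simpa using hsum j
    obtain ⟨y, hy1, hy2⟩ := ih a' b hb'
    by_cases hcy : c ⬝ᵥ y ≤ 0
    · refine ⟨y, ?_, hy2⟩
      intro i
      refine Fin.lastCases hcy hy1 i
    · push_neg at hcy
      set α : ℝ := c ⬝ᵥ y with hα
      have hαne : α ≠ 0 := ne_of_gt hcy
      set b1 : Fin d → ℝ := b - ((b ⬝ᵥ y)/α) • c with hb1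
      set a1 : Fin k → Fin d → ℝ := fun i => a' i - ((a' i ⬝ᵥ y)/α) • c with ha1
      have h1 : ¬ ∃ u : Fin k → ℝ, (∀ i, 0 ≤ u i) ∧ ∀ j, ∑ i, u i * a1 i j = b1 j := by
        rintro ⟨u, hu, hsum⟩
        set μ : ℝ := ((b ⬝ᵥ y) - ∑ i, u i * (a' i ⬝ᵥ y))/α with hμ
        have hμ0 : 0 ≤ μ := by
          apply div_nonneg _ (le_of_lt hcy)
          have : ∑ i, u i * (a' i ⬝ᵥ y) ≤ 0 :=
            Finset.sum_nonpos fun i _ => mul_nonpos_of_nonneg_of_nonpos (hu i) (hy1 i)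
          linarith
        refine h ⟨Fin.snoc u μ, ?_, ?_⟩
        · intro i
          refine Fin.lastCases ?_ ?_ i
          · simpa using hμ0
          · intro i; simpa using hu i
        · intro j
          rw [Fin.sum_univ_castSucc]
          simp only [Fin.snoc_castSucc, Fin.snoc_last]
          show ∑ i, u i * a' i j + μ * c j = b j
          have hs := hsum j
          simp only [ha1, Pi.sub_apply, Pi.smul_apply, smul_eq_mul, hb1, mul_sub] at hs
          rw [Finset.sum_sub_distrib] at hs
          have hexp : ∀ i : Fin k, u i * ((a' i ⬝ᵥ y)/α * c j)
              = (u i * (a' i ⬝ᵥ y)) * c j / α := by intro i; ring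
          rw [Finset.sum_congr rfl (fun i _ => hexp i), ← Finset.sum_div,
            ← Finset.sum_mul] at hs
          have : ∑ i, u i * a' i j
              = b j - (b ⬝ᵥ y)/α * c j + (∑ i, u i * (a' i ⬝ᵥ y)) * c j / α := by
            linarith
          rw [this, hμ]
          field_simp
          ring
      obtain ⟨z, hz1, hz2⟩ := ih a1 b1 h1
      refine ⟨z - ((c ⬝ᵥ z)/α) • y, ?_, ?_⟩
      · intro i
        refine Fin.lastCases ?_ ?_ i
        · rw [dotProduct_sub, dotProduct_smul, smul_eq_mul, ← hc, ← hα]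
          rw [div_mul_cancel₀ _ hαne]
          simp
        · intro i
          have := hz1 i
          rw [ha1] at this
          simp only [sub_dotProduct, smul_dotProduct, smul_eq_mul] at this
          rw [dotProduct_sub, dotProduct_smul, smul_eq_mul]
          -- this : a' i ⬝ᵥ z - (a' i ⬝ᵥ y)/α * (c ⬝ᵥ z) ≤ 0
          -- goal : a' i ⬝ᵥ z - (c ⬝ᵥ z)/α * (a' i ⬝ᵥ y) ≤ 0
          have heq : (a' i ⬝ᵥ y)/α * (c ⬝ᵥ z) = (c ⬝ᵥ z)/α * (a' i ⬝ᵥ y) := by ring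
          rw [heq] at this
          exact this
      · have := hz2
        rw [hb1] at this
        simp only [sub_dotProduct, smul_dotProduct, smul_eq_mul] at this
        rw [dotProduct_sub, dotProduct_smul, smul_eq_mul]
        have heq : (b ⬝ᵥ y)/α * (c ⬝ᵥ z) = (c ⬝ᵥ z)/α * (b ⬝ᵥ y) := by ring
        rw [heq] at this
        exact this

theorem my_farkas_affine {k d : ℕ} (A : Fin k → Fin d → ℝ) (c : Fin k → ℝ)
    (a : Fin d → ℝ) (β : ℝ)
    (hfeas : ∃ x, ∀ i, A i ⬝ᵥ x ≤ c i)
    (himp : ∀ x, (∀ i, A i ⬝ᵥ x ≤ c i) → a ⬝ᵥ x ≤ β) :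
    ∃ u : Fin k → ℝ, (∀ i, 0 ≤ u i) ∧ (∀ j, ∑ i, u i * A i j = a j) ∧
      ∑ i, u i * c i ≤ β := by
  set A1 : Fin (k+1) → Fin (d+1) → ℝ :=
    Fin.cons (Fin.cons (-1) 0) (fun i => Fin.cons (-(c i)) (A i)) with hA1
  set b1 : Fin (d+1) → ℝ := Fin.cons (-β) a with hb1
  have hmem : ∃ u : Fin (k+1) → ℝ, (∀ i, 0 ≤ u i) ∧
      ∀ j, ∑ i, u i * A1 i j = b1 j := by
    by_contra hcon
    obtain ⟨y, hy1, hy2⟩ := my_farkas_cone (k+1) A1 b1 hcon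
    set t : ℝ := y 0 with ht
    set x : Fin d → ℝ := fun j => y j.succ with hx
    have hdot : ∀ (s : ℝ) (v : Fin d → ℝ), (Fin.cons s v : Fin (d+1) → ℝ) ⬝ᵥ y
        = s * t + v ⬝ᵥ x := by
      intro s v
      simp [dotProduct, Fin.sum_univ_succ]
      rfl
    have ht0 : 0 ≤ t := by
      have := hy1 0
      rw [hA1, Fin.cons_zero, hdot] at this
      simp only [zero_dotProduct] at this
      linarith
    have hrow : ∀ i : Fin k, A i ⬝ᵥ x ≤ c i * t := by
      intro i
      have := hy1 i.succ
      rw [hA1, Fin.cons_succ, hdot] at this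
      linarith
    have hgoal : a ⬝ᵥ x ≤ β * t := by
      rcases eq_or_lt_of_le ht0 with h0 | hpos
      · -- t = 0
        have hrow0 : ∀ i, A i ⬝ᵥ x ≤ 0 := by
          intro i; have := hrow i; rw [← h0] at this; linarith
        obtain ⟨x0, hx0⟩ := hfeas
        have hax : a ⬝ᵥ x ≤ 0 := by
          by_contra hpos'
          push_neg at hpos'
          set s : ℝ := (β - a ⬝ᵥ x0 + 1)/(a ⬝ᵥ x) with hs
          have hs0 : 0 ≤ s := by
            apply div_nonneg _ (le_of_lt hpos')
            have := himp x0 hx0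
            linarith
          have hfeas2 : ∀ i, A i ⬝ᵥ (x0 + s • x) ≤ c i := by
            intro i
            rw [dotProduct_add, dotProduct_smul, smul_eq_mul]
            have := mul_nonpos_of_nonneg_of_nonpos hs0 (hrow0 i)
            have := hx0 i
            linarith
          have := himp _ hfeas2
          rw [dotProduct_add, dotProduct_smul, smul_eq_mul, hs,
            div_mul_cancel₀ _ (ne_of_gt hpos')] at this
          linarith
        rw [← h0]
        linarith
      · -- t > 0
        have hfeas2 : ∀ i, A i ⬝ᵥ (t⁻¹ • x) ≤ c i := by
          intro i
          rw [dotProduct_smul, smul_eq_mul]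
          rw [inv_mul_le_iff₀ hpos]
          have := hrow i; linarith [hrow i, mul_comm (c i) t]
        have := himp _ hfeas2
        rw [dotProduct_smul, smul_eq_mul, inv_mul_le_iff₀ hpos] at this
        linarith [mul_comm β t]
    have : b1 ⬝ᵥ y ≤ 0 := by
      rw [hb1, hdot]
      linarith
    linarith
  obtain ⟨u1, hu1, hsum1⟩ := hmem
  refine ⟨fun i => u1 i.succ, fun i => hu1 i.succ, ?_, ?_⟩
  · intro j
    have := hsum1 j.succ
    rw [Fin.sum_univ_succ] at this
    simpa [hA1, hb1] using this
  · have := hsum1 0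
    rw [Fin.sum_univ_succ] at this
    simp only [hA1, hb1, Fin.cons_zero, Fin.cons_succ, mul_neg, mul_one] at this
    have h0 : 0 ≤ u1 0 := hu1 0
    have : ∑ i : Fin k, u1 i.succ * c i = β - u1 0 := by
      have h2 : ∑ x : Fin k, -(u1 x.succ * c x) = -∑ x : Fin k, u1 x.succ * c x := by
        rw [Finset.sum_neg_distrib]
      rw [h2] at this
      linarith
    linarith

/-- Characterization of dual optimal solutions via complementary slackness, and the
strict complementarity theorem: given the nonempty set `F` of optimal solutions of
`max{wᵀx : Mx ≤ b}` and a dual feasible `y`, optimality of `y` is equivalent to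
`yᵢ = 0` for every `i` not tight on all of `F`; moreover some dual optimum has
`yᵢ > 0` for every `i` tight on all of `F`. -/
theorem dual_opt_char_and_strict_complementarity {m n : ℕ}
    (M : Matrix (Fin m) (Fin n) ℝ) (b : Fin m → ℝ) (w : Fin n → ℝ)
    (Q : Set (Fin n → ℝ)) (hQ : Q = {x | ∀ i, ∑ j, M i j * x j ≤ b i})
    (F : Set (Fin n → ℝ))
    (hF : F = {x ∈ Q | ∀ y ∈ Q, ∑ j, w j * y j ≤ ∑ j, w j * x j})
    (hFne : F.Nonempty)
    (I : Set (Fin m)) (hI : I = {i | ∀ x ∈ F, ∑ j, M i j * x j = b i})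
    (dualFeas : (Fin m → ℝ) → Prop)
    (hdf : dualFeas = fun y => (∀ i, 0 ≤ y i) ∧ ∀ j, ∑ i, y i * M i j = w j)
    (y : Fin m → ℝ) (hy : dualFeas y) :
    ((∀ z, dualFeas z → ∑ i, b i * y i ≤ ∑ i, b i * z i) ↔ ∀ i ∉ I, y i = 0) ∧
      (∃ y' : Fin m → ℝ, dualFeas y' ∧
        (∀ z, dualFeas z → ∑ i, b i * y' i ≤ ∑ i, b i * z i) ∧
        ∀ i ∈ I, 0 < y' i) := by
  subst hQ hF hI hdf
  beta_reduce at hy ⊢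
  obtain ⟨xs, hxs⟩ := hFne
  set Q : Set (Fin n → ℝ) := {x | ∀ i, ∑ j, M i j * x j ≤ b i} with hQ
  set F : Set (Fin n → ℝ) :=
    {x ∈ Q | ∀ y ∈ Q, ∑ j, w j * y j ≤ ∑ j, w j * x j} with hF
  set v : ℝ := ∑ j, w j * xs j with hv
  have hxsQ : xs ∈ Q := hxs.1
  have hxsopt : ∀ x ∈ Q, ∑ j, w j * x j ≤ v := hxs.2
  -- sum swap
  have hswap : ∀ (z : Fin m → ℝ) (x : Fin n → ℝ),
      (∀ j, ∑ i, z i * M i j = w j) →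
      ∑ i, z i * (∑ j, M i j * x j) = ∑ j, w j * x j := by
    intro z x hz
    calc ∑ i, z i * (∑ j, M i j * x j) = ∑ i, ∑ j, z i * M i j * x j := by
          refine Finset.sum_congr rfl fun i _ => ?_
          rw [Finset.mul_sum]
          exact Finset.sum_congr rfl fun j _ => by ring
      _ = ∑ j, ∑ i, z i * M i j * x j := Finset.sum_comm
      _ = ∑ j, (∑ i, z i * M i j) * x j := by
          exact Finset.sum_congr rfl fun j _ => (Finset.sum_mul _ _ _).symm
      _ = ∑ j, w j * x j := Finset.sum_congr rfl fun j _ => by rw [hz j]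
  -- weak duality
  have hwd : ∀ (z : Fin m → ℝ) (x : Fin n → ℝ),
      ((∀ i, 0 ≤ z i) ∧ ∀ j, ∑ i, z i * M i j = w j) → x ∈ Q →
      ∑ j, w j * x j ≤ ∑ i, b i * z i := by
    intro z x hz hx
    rw [← hswap z x hz.2]
    calc ∑ i, z i * (∑ j, M i j * x j) ≤ ∑ i, z i * b i :=
          Finset.sum_le_sum fun i _ => mul_le_mul_of_nonneg_left (hx i) (hz.1 i)
      _ = ∑ i, b i * z i := Finset.sum_congr rfl fun i _ => mul_comm _ _
  have hvF : ∀ x ∈ F, ∑ j, w j * x j = v := fun x hx =>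
    le_antisymm (hxsopt x hx.1) (hx.2 xs hxsQ)
  -- strong duality
  obtain ⟨y0, hy0nn, hy0M, hy0bv⟩ :=
    my_farkas_affine (fun i => M i) b w v ⟨xs, fun i => hxsQ i⟩
      (fun x hx => hxsopt x fun i => hx i)
  have hy0feas : (∀ i, 0 ≤ y0 i) ∧ ∀ j, ∑ i, y0 i * M i j = w j := ⟨hy0nn, hy0M⟩
  have hy0val : ∑ i, b i * y0 i = v := by
    refine le_antisymm ?_ (hwd y0 xs hy0feas hxsQ)
    calc ∑ i, b i * y0 i = ∑ i, y0 i * b i :=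
          Finset.sum_congr rfl fun i _ => mul_comm _ _
      _ ≤ v := hy0bv
  -- characterization of optimal value
  have hoptval : ∀ z : Fin m → ℝ,
      ((∀ i, 0 ≤ z i) ∧ ∀ j, ∑ i, z i * M i j = w j) →
      ((∀ zz : Fin m → ℝ, ((∀ i, 0 ≤ zz i) ∧ ∀ j, ∑ i, zz i * M i j = w j) →
          ∑ i, b i * z i ≤ ∑ i, b i * zz i) ↔ ∑ i, b i * z i = v) := by
    intro z hz
    constructor
    · intro hopt
      exact le_antisymm (hy0val ▸ hopt y0 hy0feas) (hwd z xs hz hxsQ)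
    · intro hval zz hzz
      rw [hval]
      exact hwd zz xs hzz hxsQ
  constructor
  · -- part A
    rw [hoptval y hy]
    constructor
    · -- optimal ⇒ complementary slackness
      intro hval i₀ hi₀
      simp only [Set.mem_setOf_eq, not_forall] at hi₀
      obtain ⟨x, hxF, hne⟩ := hi₀
      have hlt : ∑ j, M i₀ j * x j < b i₀ := lt_of_le_of_ne (hxF.1 i₀) hne
      have hzero : ∑ i, y i * (b i - ∑ j, M i j * x j) = 0 := by
        have e1 : ∑ i, y i * (b i - ∑ j, M i j * x j)
            = ∑ i, y i * b i - ∑ i, y i * (∑ j, M i j * x j) := by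
          rw [← Finset.sum_sub_distrib]
          exact Finset.sum_congr rfl fun i _ => by ring
        have e2 : ∑ i, y i * b i = ∑ i, b i * y i :=
          Finset.sum_congr rfl fun i _ => mul_comm _ _
        rw [e1, e2, hval, hswap y x hy.2, hvF x hxF]
        ring
      have hterms := (Finset.sum_eq_zero_iff_of_nonneg
        (fun i _ => mul_nonneg (hy.1 i) (sub_nonneg.2 (hxF.1 i)))).mp hzero
      have := hterms i₀ (Finset.mem_univ _)
      rcases mul_eq_zero.mp this with h | h
      · exact h
      · exact absurd h (ne_of_gt (sub_pos.2 hlt))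
    · -- complementary slackness ⇒ optimal
      intro hcs
      have : ∑ i, b i * y i = ∑ i, y i * (∑ j, M i j * xs j) := by
        refine Finset.sum_congr rfl fun i _ => ?_
        by_cases hi : i ∈ {i | ∀ x ∈ F, ∑ j, M i j * x j = b i}
        · rw [hi xs hxs, mul_comm]
        · rw [hcs i hi]; ring
      rw [this, hswap y xs hy.2, ← hv]
  · -- part B
    have hkey : ∀ i₀ : Fin m, ∃ yy : Fin m → ℝ,
        ((∀ i, 0 ≤ yy i) ∧ ∀ j, ∑ i, yy i * M i j = w j) ∧
        ∑ i, b i * yy i = v ∧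
        (i₀ ∈ {i | ∀ x ∈ F, ∑ j, M i j * x j = b i} → 0 < yy i₀) := by
      intro i₀
      by_cases hi₀ : i₀ ∈ {i | ∀ x ∈ F, ∑ j, M i j * x j = b i}
      · obtain ⟨u2, hu2nn, hu2M, hu2v⟩ :=
          my_farkas_affine (Fin.cons (fun j => -(w j)) (fun i => M i))
            (Fin.cons (-v) b) (fun j => -(M i₀ j)) (-(b i₀))
            ⟨xs, by
              intro i
              refine Fin.cases ?_ ?_ i
              · show (fun j => -(w j)) ⬝ᵥ xs ≤ -v
                have : (fun j => -(w j)) ⬝ᵥ xs = -∑ j, w j * xs j := by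
                  simp [dotProduct, Finset.sum_neg_distrib]
                rw [this, ← hv]
              · intro i
                show M i ⬝ᵥ xs ≤ b i
                exact hxsQ i⟩
            (by
              intro x hx
              have hQx : x ∈ Q := fun i => hx i.succ
              have hwx : v ≤ ∑ j, w j * x j := by
                have := hx 0
                have e : (Fin.cons (fun j => -(w j)) (fun i => M i) :
                    Fin (m+1) → Fin n → ℝ) 0 ⬝ᵥ x = -∑ j, w j * x j := by
                  simp [dotProduct, Finset.sum_neg_distrib]
                rw [e] at this
                simp only [Fin.cons_zero] at this
                linarith
              have hxF : x ∈ F := ⟨hQx, fun z hz => le_trans (hxsopt z hz) hwx⟩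
              have heq := hi₀ x hxF
              show (fun j => -(M i₀ j)) ⬝ᵥ x ≤ -(b i₀)
              have e : (fun j => -(M i₀ j)) ⬝ᵥ x = -∑ j, M i₀ j * x j := by
                simp [dotProduct, Finset.sum_neg_distrib]
              rw [e, heq])
        set lam : ℝ := u2 0 with hlam
        set u : Fin m → ℝ := fun i => u2 i.succ with hu
        have hM : ∀ j, ∑ i, u i * M i j + M i₀ j = lam * w j := by
          intro j
          have := hu2M j
          rw [Fin.sum_univ_succ] at this
          simp only [Fin.cons_zero, Fin.cons_succ] at this
          have : lam * (-(w j)) + ∑ i, u i * M i j = -(M i₀ j) := this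
          linarith
        have hv2 : ∑ i, b i * u i + b i₀ ≤ lam * v := by
          have := hu2v
          rw [Fin.sum_univ_succ] at this
          simp only [Fin.cons_zero, Fin.cons_succ] at this
          have e : ∑ i : Fin m, u2 i.succ * b i = ∑ i, b i * u i :=
            Finset.sum_congr rfl fun i _ => mul_comm _ _
          rw [e] at this
          linarith
        set yb : Fin m → ℝ := fun i => u i + if i = i₀ then 1 else 0 with hyb
        have hybnn : ∀ i, 0 ≤ yb i := by
          intro i
          have := hu2nn i.succ
          simp only [hyb]
          split <;> [linarith; simpa using this]
        have hybM : ∀ j, ∑ i, yb i * M i j = lam * w j := by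
          intro j
          have e1 : ∑ i, yb i * M i j
              = ∑ i, u i * M i j + ∑ i, (if i = i₀ then (1:ℝ) else 0) * M i j := by
            rw [← Finset.sum_add_distrib]
            exact Finset.sum_congr rfl fun i _ => by simp only [hyb]; ring
          have e2 : ∑ i, (if i = i₀ then (1:ℝ) else 0) * M i j = M i₀ j := by
            simp
          rw [e1, e2, hM j]
        have hybb : ∑ i, b i * yb i ≤ lam * v := by
          have e1 : ∑ i, b i * yb i
              = ∑ i, b i * u i + ∑ i, b i * (if i = i₀ then (1:ℝ) else 0) := by
            rw [← Finset.sum_add_distrib]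
            exact Finset.sum_congr rfl fun i _ => by simp only [hyb]; ring
          have e2 : ∑ i, b i * (if i = i₀ then (1:ℝ) else 0) = b i₀ := by
            simp [mul_ite]
          rw [e1, e2]
          exact hv2
        have hybi₀ : 1 ≤ yb i₀ := by
          have := hu2nn i₀.succ
          simp only [hyb, if_pos rfl]
          show (1:ℝ) ≤ u2 i₀.succ + 1
          linarith
        rcases eq_or_lt_of_le (hu2nn 0) with h0 | hpos
        · -- lam = 0
          have hlam0 : lam = 0 := h0.symm
          refine ⟨fun i => y0 i + yb i, ⟨?_, ?_⟩, ?_, fun _ => ?_⟩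
          · intro i; exact add_nonneg (hy0nn i) (hybnn i)
          · intro j
            have e1 : ∑ i, (y0 i + yb i) * M i j
                = ∑ i, y0 i * M i j + ∑ i, yb i * M i j := by
              rw [← Finset.sum_add_distrib]
              exact Finset.sum_congr rfl fun i _ => by ring
            rw [e1, hy0M j, hybM j, hlam0]
            ring
          · have e1 : ∑ i, b i * (y0 i + yb i)
                = ∑ i, b i * y0 i + ∑ i, b i * yb i := by
              rw [← Finset.sum_add_distrib]
              exact Finset.sum_congr rfl fun i _ => by ring
            have hle : ∑ i, b i * (y0 i + yb i) ≤ v := by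
              rw [e1, hy0val]
              have := hybb
              rw [hlam0] at this
              linarith
            refine le_antisymm hle ?_
            exact hwd _ xs ⟨fun i => add_nonneg (hy0nn i) (hybnn i), by
              intro j
              have e1 : ∑ i, (y0 i + yb i) * M i j
                  = ∑ i, y0 i * M i j + ∑ i, yb i * M i j := by
                rw [← Finset.sum_add_distrib]
                exact Finset.sum_congr rfl fun i _ => by ring
              rw [e1, hy0M j, hybM j, hlam0]
              ring⟩ hxsQ
          · have := hy0nn i₀
            have := hybi₀
            show 0 < y0 i₀ + yb i₀
            linarith
        · -- lam > 0
          have hfeas2 : (∀ i, 0 ≤ lam⁻¹ * yb i) ∧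
              ∀ j, ∑ i, (lam⁻¹ * yb i) * M i j = w j := by
            constructor
            · intro i; exact mul_nonneg (le_of_lt (inv_pos.2 hpos)) (hybnn i)
            · intro j
              have e1 : ∑ i, (lam⁻¹ * yb i) * M i j
                  = lam⁻¹ * ∑ i, yb i * M i j := by
                rw [Finset.mul_sum]
                exact Finset.sum_congr rfl fun i _ => by ring
              rw [e1, hybM j]
              field_simp
              exact mul_div_cancel_left₀ _ hpos.ne'
          refine ⟨fun i => lam⁻¹ * yb i, hfeas2, ?_, fun _ => ?_⟩
          · have hle : ∑ i, b i * (lam⁻¹ * yb i) ≤ v := by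
              have e1 : ∑ i, b i * (lam⁻¹ * yb i)
                  = lam⁻¹ * ∑ i, b i * yb i := by
                rw [Finset.mul_sum]
                exact Finset.sum_congr rfl fun i _ => by ring
              rw [e1]
              calc lam⁻¹ * ∑ i, b i * yb i ≤ lam⁻¹ * (lam * v) :=
                    mul_le_mul_of_nonneg_left hybb (le_of_lt (inv_pos.2 hpos))
                _ = v := by field_simp; exact mul_div_cancel_left₀ _ hpos.ne'
            exact le_antisymm hle (hwd _ xs hfeas2 hxsQ)
          · show 0 < lam⁻¹ * yb i₀
            exact mul_pos (inv_pos.2 hpos) (lt_of_lt_of_le zero_lt_one hybi₀)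
      · exact ⟨y0, hy0feas, hy0val, fun h => absurd h hi₀⟩
    choose g hg using hkey
    set N : ℝ := (m : ℝ) + 1 with hN
    have hNpos : 0 < N := by positivity
    refine ⟨fun i => N⁻¹ * (y0 i + ∑ i₀, g i₀ i), ⟨?_, ?_⟩, ?_, ?_⟩
    · intro i
      exact mul_nonneg (le_of_lt (inv_pos.2 hNpos))
        (add_nonneg (hy0nn i) (Finset.sum_nonneg fun i₀ _ => (hg i₀).1.1 i))
    · intro j
      have e1 : ∑ i, (N⁻¹ * (y0 i + ∑ i₀, g i₀ i)) * M i j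
          = N⁻¹ * (∑ i, y0 i * M i j + ∑ i, ∑ i₀, g i₀ i * M i j) := by
        rw [← Finset.sum_add_distrib, Finset.mul_sum]
        refine Finset.sum_congr rfl fun i _ => ?_
        rw [← Finset.sum_mul]
        ring
      rw [e1, hy0M j, Finset.sum_comm]
      have e2 : ∑ i₀ : Fin m, ∑ i, g i₀ i * M i j = ∑ i₀ : Fin m, w j :=
        Finset.sum_congr rfl fun i₀ _ => (hg i₀).1.2 j
      rw [e2, Finset.sum_const, Finset.card_univ, Fintype.card_fin, nsmul_eq_mul]
      field_simp
      ring
    · have hval : ∑ i, b i * (N⁻¹ * (y0 i + ∑ i₀, g i₀ i)) = v := by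
        have e1 : ∑ i, b i * (N⁻¹ * (y0 i + ∑ i₀, g i₀ i))
            = N⁻¹ * (∑ i, b i * y0 i + ∑ i, ∑ i₀, b i * g i₀ i) := by
          rw [← Finset.sum_add_distrib, Finset.mul_sum]
          refine Finset.sum_congr rfl fun i _ => ?_
          rw [← Finset.mul_sum]
          ring
        rw [e1, hy0val, Finset.sum_comm]
        have e2 : ∑ i₀ : Fin m, ∑ i, b i * g i₀ i = ∑ i₀ : Fin m, v :=
          Finset.sum_congr rfl fun i₀ _ => (hg i₀).2.1
        rw [e2, Finset.sum_const, Finset.card_univ, Fintype.card_fin, nsmul_eq_mul]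
        field_simp
        ring
      intro z hz
      rw [hval]
      exact hwd z xs hz hxsQ
    · intro i₀ hi₀
      have h1 : g i₀ i₀ ≤ ∑ i₁, g i₁ i₀ :=
        Finset.single_le_sum (fun i₁ _ => (hg i₁).1.1 i₀) (Finset.mem_univ i₀)
      have h2 : 0 < g i₀ i₀ := (hg i₀).2.2 hi₀
      have h3 : 0 ≤ y0 i₀ := hy0nn i₀
      show 0 < N⁻¹ * (y0 i₀ + ∑ i₁, g i₁ i₀)
      have : 0 < y0 i₀ + ∑ i₁, g i₁ i₀ := by linarith
      exact mul_pos (inv_pos.2 hNpos) this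
end

section
/- Let F be the nonempty set of optimal solutions of max{wᵀx : Mx ≤ b}. Then the affine hull of the set of optimal solutions of the dual min{bᵀy : Mᵀy = w, y ≥ 0} equals {y ∈ ℝᵐ : Mᵀy = w, yᵢ = 0 for all i ∉ I(F)}, where I(F) is the set of constraint indices of Mx ≤ b tight on all of F. -/
open Finset

section Cone

variable {ι : Type*} [Fintype ι] [DecidableEq ι] {E : Type*}
  [NormedAddCommGroup E] [NormedSpace ℝ E] [FiniteDimensional ℝ E]

lemma cone_isClosed (v : ι → E) (s : Finset ι) :
    IsClosed {x : E | ∃ l : ι → ℝ, (∀ i, 0 ≤ l i) ∧ x = ∑ i ∈ s, l i • v i} := by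
  induction s using Finset.strongInduction with
  | _ s ih =>
  by_cases hli : LinearIndependent ℝ (fun i : s => v i)
  · let T : (s → ℝ) →ₗ[ℝ] E :=
      { toFun := fun l => ∑ i : s, l i • v i
        map_add' := by intro a c; simp [add_smul, Finset.sum_add_distrib]
        map_smul' := by intro c a; simp [smul_smul, Finset.smul_sum] }
    have hker : LinearMap.ker T = ⊥ := by
      rw [LinearMap.ker_eq_bot']
      intro g hg
      have h2 := Fintype.linearIndependent_iff.mp hli g hg
      funext i; exact h2 i
    have hT := LinearMap.isClosedEmbedding_of_injective (𝕜 := ℝ) hker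
    have hset : {x : E | ∃ l : ι → ℝ, (∀ i, 0 ≤ l i) ∧ x = ∑ i ∈ s, l i • v i}
        = T '' {l : s → ℝ | ∀ i, 0 ≤ l i} := by
      ext x
      constructor
      · rintro ⟨l, hl, rfl⟩
        refine ⟨fun i => l i, fun i => hl i, ?_⟩
        show ∑ i : s, l i • v i = _
        rw [Finset.sum_coe_sort s (fun i => l i • v i)]
      · rintro ⟨l, hl, rfl⟩
        refine ⟨fun i => if h : i ∈ s then l ⟨i, h⟩ else 0, ?_, ?_⟩
        · intro i
          by_cases h : i ∈ s
          · simpa [h] using hl ⟨i, h⟩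
          · simp [h]
        · show _ = ∑ i ∈ s, _
          rw [← Finset.sum_coe_sort s]
          exact Finset.sum_congr rfl (fun i _ => by simp)
    rw [hset]
    apply hT.isClosedMap
    have : {l : s → ℝ | ∀ i, 0 ≤ l i} = ⋂ i : s, {l : s → ℝ | 0 ≤ l i} := by
      ext l; simp [Set.mem_iInter]
    rw [this]
    exact isClosed_iInter fun i => isClosed_le continuous_const (continuous_apply i)
  · obtain ⟨g, hgsum, i₀, hgi₀⟩ := Fintype.not_linearIndependent_iff.mp hli
    set ε : ℝ := if 0 < g i₀ then 1 else -1 with hε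
    let G : ι → ℝ := fun i => if h : i ∈ s then ε * g ⟨i, h⟩ else 0
    have hGmem : ∀ i : s, G i = ε * g i := fun i => by simp [G]
    have hGsum : ∑ i ∈ s, G i • v i = 0 := by
      rw [← Finset.sum_coe_sort s (fun i => G i • v i)]
      have : ∀ i : s, G i • v i = ε • (g i • v i.1) := fun i => by
        rw [hGmem i, mul_smul]
      rw [Finset.sum_congr rfl fun i _ => this i, ← Finset.smul_sum, hgsum, smul_zero]
    have hGpos : 0 < G i₀ := by
      rw [hGmem i₀, hε]
      rcases Ne.lt_or_gt hgi₀ with h | h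
      · rw [if_neg (not_lt.mpr h.le)]; nlinarith
      · rw [if_pos h]; linarith
    have hunion : {x : E | ∃ l : ι → ℝ, (∀ i, 0 ≤ l i) ∧ x = ∑ i ∈ s, l i • v i}
        = ⋃ i ∈ s.filter (fun i => 0 < G i),
            {x : E | ∃ l : ι → ℝ, (∀ i, 0 ≤ l i) ∧ x = ∑ j ∈ s.erase i, l j • v j} := by
      ext x
      simp only [Set.mem_iUnion, Set.mem_setOf_eq, Finset.mem_filter, exists_prop]
      constructor
      · rintro ⟨l, hl, rfl⟩
        obtain ⟨i₁, hi₁, hmin⟩ := Finset.exists_min_image (s.filter fun i => 0 < G i)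
          (fun i => l i / G i) ⟨i₀, Finset.mem_filter.mpr ⟨i₀.2, hGpos⟩⟩
        rw [Finset.mem_filter] at hi₁
        obtain ⟨hi₁s, hi₁pos⟩ := hi₁
        set t : ℝ := l i₁ / G i₁ with htdef
        have ht0 : 0 ≤ t := div_nonneg (hl i₁) hi₁pos.le
        refine ⟨i₁, ⟨hi₁s, hi₁pos⟩, fun j => if h : j ∈ s then l j - t * G j else 0, ?_, ?_⟩
        · intro j
          by_cases h : j ∈ s
          · simp only [dif_pos h]
            by_cases hGj : 0 < G j
            · have := hmin j (Finset.mem_filter.mpr ⟨h, hGj⟩)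
              rw [le_div_iff₀ hGj] at this
              linarith
            · nlinarith [hl j, mul_nonneg ht0 (neg_nonneg.mpr (not_lt.mp hGj))]
          · simp [h]
        · have hsum : ∑ j ∈ s, (if h : j ∈ s then l j - t * G j else 0) • v j
              = ∑ j ∈ s, l j • v j := by
            have : ∀ j ∈ s, (if h : j ∈ s then l j - t * G j else 0) • v j
                = l j • v j - t • (G j • v j) := by
              intro j hj; rw [dif_pos hj, sub_smul, mul_smul]
            rw [Finset.sum_congr rfl this, Finset.sum_sub_distrib, ← Finset.smul_sum,
              hGsum, smul_zero, sub_zero]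
          have hzero : (if h : i₁ ∈ s then l i₁ - t * G i₁ else 0) = 0 := by
            rw [dif_pos hi₁s, htdef, div_mul_cancel₀ _ hi₁pos.ne', sub_self]
          symm
          calc ∑ j ∈ s.erase i₁, (if h : j ∈ s then l j - t * G j else 0) • v j
              = ∑ j ∈ s, (if h : j ∈ s then l j - t * G j else 0) • v j := by
                rw [← Finset.sum_erase_add s _ hi₁s, hzero, zero_smul, add_zero]
            _ = ∑ j ∈ s, l j • v j := hsum
      · rintro ⟨i, ⟨his, _⟩, l, hl, rfl⟩
        refine ⟨fun j => if j = i then 0 else l j, fun j => by dsimp only; split <;> simp [hl], ?_⟩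
        symm
        calc ∑ j ∈ s, (if j = i then 0 else l j) • v j
            = ∑ j ∈ s.erase i, (if j = i then 0 else l j) • v j := by
              rw [← Finset.sum_erase_add s _ his, if_pos rfl, zero_smul, add_zero]
          _ = ∑ j ∈ s.erase i, l j • v j :=
              Finset.sum_congr rfl fun j hj => by rw [if_neg (Finset.ne_of_mem_erase hj)]
    rw [hunion]
    apply Set.Finite.isClosed_biUnion (Finset.finite_toSet _)
    intro i hi
    rw [Finset.mem_coe, Finset.mem_filter] at hi
    exact ih (s.erase i) (Finset.erase_ssubset hi.1)

end Cone

section Farkas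

open scoped InnerProductSpace

variable {d k : ℕ}

lemma farkas_eucl (v : Fin k → EuclideanSpace ℝ (Fin d)) (c : EuclideanSpace ℝ (Fin d))
    (h : ∀ x : EuclideanSpace ℝ (Fin d), (∀ i, 0 ≤ ⟪v i, x⟫_ℝ) → 0 ≤ ⟪c, x⟫_ℝ) :
    ∃ l : Fin k → ℝ, (∀ i, 0 ≤ l i) ∧ c = ∑ i, l i • v i := by
  by_contra hc
  push_neg at hc
  let C : ConvexCone ℝ (EuclideanSpace ℝ (Fin d)) :=
    { carrier := {x | ∃ l : Fin k → ℝ, (∀ i, 0 ≤ l i) ∧ x = ∑ i, l i • v i}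
      smul_mem' := by
        rintro r hr x ⟨l, hl, rfl⟩
        exact ⟨fun i => r * l i, fun i => mul_nonneg hr.le (hl i), by
          rw [Finset.smul_sum]; exact Finset.sum_congr rfl fun i _ => (mul_smul _ _ _).symm⟩
      add_mem' := by
        rintro x ⟨l, hl, rfl⟩ y ⟨l', hl', rfl⟩
        exact ⟨fun i => l i + l' i, fun i => add_nonneg (hl i) (hl' i), by
          rw [← Finset.sum_add_distrib]
          exact Finset.sum_congr rfl fun i _ => (add_smul _ _ _).symm⟩ }
  have hCne : (C : Set (EuclideanSpace ℝ (Fin d))).Nonempty :=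
    ⟨0, ⟨fun _ => 0, fun i => le_refl 0, by simp⟩⟩
  have hCclosed : IsClosed (C : Set (EuclideanSpace ℝ (Fin d))) := by
    have := cone_isClosed v (Finset.univ : Finset (Fin k))
    exact this
  have hcC : c ∉ C := by
    rintro ⟨l, hl, hsum⟩
    exact absurd hsum (hc l hl)
  obtain ⟨y, hy1, hy2⟩ :=
    ProperCone.hyperplane_separation' (x₀ := c)
      ({ toSubmodule :=
          { carrier := (C : Set (EuclideanSpace ℝ (Fin d)))
            add_mem' := fun ha hb => C.add_mem ha hb
            zero_mem' := ⟨fun _ => 0, fun _ => le_refl 0, by simp⟩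
            smul_mem' := fun r x hx => (by
              by_cases hr : r = 0
              · subst hr; rw [zero_smul]; exact ⟨fun _ => 0, fun _ => le_refl 0, by simp⟩
              · exact C.smul_mem (NNReal.coe_pos.mpr (pos_iff_ne_zero.mpr hr)) hx) }
         isClosed' := hCclosed } : ProperCone ℝ (EuclideanSpace ℝ (Fin d))) hcC
  rw [real_inner_comm] at hy2
  have hvy : ∀ i, 0 ≤ ⟪v i, y⟫_ℝ := by
    intro i
    apply hy1
    exact ⟨fun j => if j = i then 1 else 0, fun j => by positivity, by simp⟩
  have := h y hvy
  rw [real_inner_comm] at this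
  linarith

lemma farkas_coord (A : Matrix (Fin k) (Fin d) ℝ) (c : Fin d → ℝ)
    (h : ∀ x : Fin d → ℝ, (∀ i, 0 ≤ ∑ j, A i j * x j) → 0 ≤ ∑ j, c j * x j) :
    ∃ l : Fin k → ℝ, (∀ i, 0 ≤ l i) ∧ ∀ j, c j = ∑ i, l i * A i j := by
  let e := (WithLp.equiv 2 (Fin d → ℝ)).symm
  have key := farkas_eucl (fun i => e (A i)) (e c) ?_
  · obtain ⟨l, hl, hsum⟩ := key
    refine ⟨l, hl, fun j => ?_⟩
    have : c j = (∑ i, l i • e (A i)) j := congrFun (congrArg (WithLp.equiv 2 (Fin d → ℝ)) hsum) j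
    rw [this]
    have : (∑ i, l i • e (A i)) j = ∑ i, (l i • e (A i)) j := by
      simp [WithLp.ofLp_sum]
    rw [this]
    exact Finset.sum_congr rfl fun i _ => rfl
  · intro x hx
    have h1 : ∀ i, ⟪e (A i), x⟫_ℝ = ∑ j, A i j * x j := fun i => by
      rw [PiLp.inner_apply]; simp [e, mul_comm]
    have h2 : ⟪e c, x⟫_ℝ = ∑ j, c j * x j := by rw [PiLp.inner_apply]; simp [e, mul_comm]
    rw [h2]
    exact h (fun j => x j) (fun i => by rw [← h1 i]; exact hx i)

end Farkas
section AffineFarkas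

variable {m n : ℕ}

lemma affine_farkas (M : Matrix (Fin m) (Fin n) ℝ) (b : Fin m → ℝ) (c : Fin n → ℝ) (γ : ℝ)
    (x₀ : Fin n → ℝ) (hx₀ : ∀ i, ∑ j, M i j * x₀ j ≤ b i)
    (hbound : ∀ x : Fin n → ℝ, (∀ i, ∑ j, M i j * x j ≤ b i) → ∑ j, c j * x j ≤ γ) :
    ∃ y : Fin m → ℝ, (∀ i, 0 ≤ y i) ∧ (∀ j, ∑ i, y i * M i j = c j) ∧ ∑ i, b i * y i ≤ γ := by
  set A : Matrix (Fin (m + 1)) (Fin (n + 1)) ℝ := fun i =>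
    Fin.lastCases (fun j => Fin.lastCases 1 (fun _ => (0 : ℝ)) j)
      (fun i' => Fin.lastCases (b i') (fun j' => -(M i' j')) ) i with hA
  set c' : Fin (n + 1) → ℝ := Fin.lastCases γ (fun j' => -(c j')) with hc'
  have hAcast : ∀ (i : Fin m) (j : Fin n), A i.castSucc j.castSucc = -(M i j) := by
    intro i j; simp [hA]
  have hAcastlast : ∀ i : Fin m, A i.castSucc (Fin.last n) = b i := by
    intro i; simp [hA]
  have hAlastcast : ∀ j : Fin n, A (Fin.last m) j.castSucc = 0 := by
    intro j; simp [hA]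
  have hAlastlast : A (Fin.last m) (Fin.last n) = 1 := by simp [hA]
  have hc'cast : ∀ j : Fin n, c' j.castSucc = -(c j) := fun j => by simp [hc']
  have hc'last : c' (Fin.last n) = γ := by simp [hc']
  have hyp : ∀ z : Fin (n+1) → ℝ, (∀ i, 0 ≤ ∑ j, A i j * z j) → 0 ≤ ∑ j, c' j * z j := by
    intro z hz
    set x : Fin n → ℝ := fun j => z j.castSucc with hx
    set t : ℝ := z (Fin.last n) with ht
    have hti : 0 ≤ t := by
      have := hz (Fin.last m)
      rw [Fin.sum_univ_castSucc] at this
      simp only [hAlastcast, hAlastlast, zero_mul, Finset.sum_const_zero, zero_add, one_mul] at this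
      exact this
    have hrow : ∀ i : Fin m, ∑ j, M i j * x j ≤ b i * t := by
      intro i
      have := hz i.castSucc
      rw [Fin.sum_univ_castSucc] at this
      simp only [hAcast, hAcastlast] at this
      have h2 : ∑ j : Fin n, -(M i j) * x j = -∑ j : Fin n, M i j * x j := by
        rw [← Finset.sum_neg_distrib]; exact Finset.sum_congr rfl fun j _ => by ring
      rw [h2] at this
      linarith
    have key : ∑ j, c j * x j ≤ γ * t := by
      rcases lt_or_eq_of_le hti with htpos | hteq
      · have hfeas : ∀ i, ∑ j, M i j * (x j / t) ≤ b i := by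
          intro i
          have h3 : ∑ j, M i j * (x j / t) = (∑ j, M i j * x j) / t := by
            rw [Finset.sum_div]; exact Finset.sum_congr rfl fun j _ => by ring
          rw [h3, div_le_iff₀ htpos]
          exact hrow i
        have hb := hbound _ hfeas
        have h3 : ∑ j, c j * (x j / t) = (∑ j, c j * x j) / t := by
          rw [Finset.sum_div]; exact Finset.sum_congr rfl fun j _ => by ring
        rw [h3, div_le_iff₀ htpos] at hb
        linarith
      · rw [← hteq]
        rw [← hteq] at hrow
        simp only [mul_zero, zero_mul] at hrow ⊢
        by_contra hpos
        push_neg at hpos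
        set Cx := ∑ j, c j * x j with hCx
        set s : ℝ := max 0 ((γ - ∑ j, c j * x₀ j + 1) / Cx) with hs
        have hs0 : 0 ≤ s := le_max_left _ _
        have hfeas : ∀ i, ∑ j, M i j * (x₀ j + s * x j) ≤ b i := by
          intro i
          have h3 : ∑ j, M i j * (x₀ j + s * x j)
              = ∑ j, M i j * x₀ j + s * ∑ j, M i j * x j := by
            rw [Finset.mul_sum, ← Finset.sum_add_distrib]
            exact Finset.sum_congr rfl fun j _ => by ring
          rw [h3]
          nlinarith [hx₀ i, mul_nonpos_of_nonneg_of_nonpos hs0 (hrow i)]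
        have hb := hbound _ hfeas
        have h3 : ∑ j, c j * (x₀ j + s * x j) = ∑ j, c j * x₀ j + s * Cx := by
          rw [hCx, Finset.mul_sum, ← Finset.sum_add_distrib]
          exact Finset.sum_congr rfl fun j _ => by ring
        rw [h3] at hb
        have hsge : (γ - ∑ j, c j * x₀ j + 1) / Cx ≤ s := le_max_right _ _
        rw [div_le_iff₀ hpos] at hsge
        nlinarith
    rw [Fin.sum_univ_castSucc, hc'last]
    have h2 : ∑ j : Fin n, c' j.castSucc * z j.castSucc = -∑ j, c j * x j := by
      rw [← Finset.sum_neg_distrib]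
      exact Finset.sum_congr rfl fun j _ => by rw [hc'cast]; ring
    rw [h2]
    linarith
  obtain ⟨l, hl0, hleq⟩ := farkas_coord A c' hyp
  refine ⟨fun i => l i.castSucc, fun i => hl0 _, ?_, ?_⟩
  · intro j
    have := hleq j.castSucc
    rw [hc'cast, Fin.sum_univ_castSucc] at this
    simp only [hAcast, hAlastcast, mul_zero, add_zero] at this
    have h2 : ∑ i : Fin m, l i.castSucc * -(M i j) = -∑ i : Fin m, l i.castSucc * M i j := by
      rw [← Finset.sum_neg_distrib]; exact Finset.sum_congr rfl fun i _ => by ring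
    rw [h2] at this
    linarith
  · have := hleq (Fin.last n)
    rw [hc'last, Fin.sum_univ_castSucc] at this
    simp only [hAcastlast, hAlastlast, mul_one] at this
    have h2 : ∑ i : Fin m, b i * l i.castSucc = ∑ i : Fin m, l i.castSucc * b i :=
      Finset.sum_congr rfl fun i _ => by ring
    rw [h2]
    linarith [hl0 (Fin.last m)]

end AffineFarkas
section Duality

lemma sum_swap_eq {m n : ℕ} (M : Matrix (Fin m) (Fin n) ℝ) (y : Fin m → ℝ) (x : Fin n → ℝ) :
    ∑ i, y i * ∑ j, M i j * x j = ∑ j, (∑ i, y i * M i j) * x j := by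
  have h1 : ∀ i : Fin m, y i * ∑ j, M i j * x j = ∑ j, y i * M i j * x j := by
    intro i; rw [Finset.mul_sum]; exact Finset.sum_congr rfl fun j _ => by ring
  have h2 : ∀ j : Fin n, (∑ i, y i * M i j) * x j = ∑ i, y i * M i j * x j :=
    fun j => Finset.sum_mul _ _ _
  simp_rw [h1, h2]
  exact Finset.sum_comm

lemma weak_duality {m n : ℕ} (M : Matrix (Fin m) (Fin n) ℝ) (b : Fin m → ℝ) (w : Fin n → ℝ)
    (y : Fin m → ℝ) (x : Fin n → ℝ) (hy0 : ∀ i, 0 ≤ y i)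
    (hyw : ∀ j, ∑ i, y i * M i j = w j) (hx : ∀ i, ∑ j, M i j * x j ≤ b i) :
    ∑ j, w j * x j ≤ ∑ i, b i * y i := by
  have h1 : ∑ j, w j * x j = ∑ i, y i * ∑ j, M i j * x j := by
    rw [sum_swap_eq M y x]
    exact (Finset.sum_congr rfl fun j _ => by rw [hyw j]).symm
  rw [h1]
  apply Finset.sum_le_sum
  intro i _
  rw [mul_comm (b i)]
  exact mul_le_mul_of_nonneg_left (hx i) (hy0 i)

lemma sum_affine_comb {m : ℕ} (ε : ℝ) (a bb cc : Fin m → ℝ) :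
    ∑ i, (a i + ε * (bb i - a i)) * cc i
      = ∑ i, a i * cc i + ε * (∑ i, bb i * cc i - ∑ i, a i * cc i) := by
  rw [mul_sub, Finset.mul_sum, Finset.mul_sum]
  rw [Finset.sum_congr rfl (fun i (_ : i ∈ Finset.univ) =>
    show (a i + ε * (bb i - a i)) * cc i
        = a i * cc i + (ε * (bb i * cc i) - ε * (a i * cc i)) by ring)]
  rw [Finset.sum_add_distrib, Finset.sum_sub_distrib]

lemma sum_affine_comb' {m : ℕ} (ε : ℝ) (a bb cc : Fin m → ℝ) :
    ∑ i, cc i * (a i + ε * (bb i - a i))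
      = ∑ i, cc i * a i + ε * (∑ i, cc i * bb i - ∑ i, cc i * a i) := by
  have h := sum_affine_comb ε a bb cc
  rw [Finset.sum_congr rfl (fun i (_ : i ∈ Finset.univ) =>
      show cc i * (a i + ε * (bb i - a i)) = (a i + ε * (bb i - a i)) * cc i from mul_comm _ _),
    h]
  congr 1
  · exact Finset.sum_congr rfl fun i _ => mul_comm _ _
  · congr 1
    congr 1
    · exact Finset.sum_congr rfl fun i _ => mul_comm _ _
    · exact Finset.sum_congr rfl fun i _ => mul_comm _ _

lemma sum_avg_swap {m : ℕ} (S : Finset (Fin m)) (f : Fin m → Fin m → ℝ) (cc : Fin m → ℝ) (N : ℝ) :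
    ∑ k, (∑ i ∈ S, f i k) / N * cc k = (∑ i ∈ S, ∑ k, f i k * cc k) / N := by
  rw [Finset.sum_congr rfl (fun k (_ : k ∈ Finset.univ) =>
    show (∑ i ∈ S, f i k) / N * cc k = ∑ i ∈ S, f i k * cc k / N by
      rw [Finset.sum_div, Finset.sum_mul]
      exact Finset.sum_congr rfl fun i _ => by ring)]
  rw [Finset.sum_comm]
  rw [Finset.sum_div]
  exact Finset.sum_congr rfl fun i _ => by rw [Finset.sum_div]

end Duality

set_option maxHeartbeats 2000000 in
/-- The affine hull of the set of optimal solutions of the dual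
`min{bᵀy : Mᵀy = w, y ≥ 0}` equals `{y : Mᵀy = w, yᵢ = 0 (i ∉ I(F))}`,
where `F` is the nonempty set of optimal solutions of `max{wᵀx : Mx ≤ b}`
and `I(F)` indexes the constraints tight on all of `F`. -/
theorem affine_hull_dual_optima {m n : ℕ}
    (M : Matrix (Fin m) (Fin n) ℝ) (b : Fin m → ℝ) (w : Fin n → ℝ)
    (Q : Set (Fin n → ℝ)) (hQ : Q = {x | ∀ i, ∑ j, M i j * x j ≤ b i})
    (F : Set (Fin n → ℝ))
    (hF : F = {x ∈ Q | ∀ y ∈ Q, ∑ j, w j * y j ≤ ∑ j, w j * x j})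
    (hFne : F.Nonempty)
    (I : Set (Fin m)) (hI : I = {i | ∀ x ∈ F, ∑ j, M i j * x j = b i})
    (dualFeas : (Fin m → ℝ) → Prop)
    (hdf : dualFeas = fun y => (∀ i, 0 ≤ y i) ∧ ∀ j, ∑ i, y i * M i j = w j)
    (D : Set (Fin m → ℝ))
    (hD : D = {y | dualFeas y ∧ ∀ z, dualFeas z → ∑ i, b i * y i ≤ ∑ i, b i * z i}) :
    (affineSpan ℝ D : Set (Fin m → ℝ)) =
      {y | (∀ j, ∑ i, y i * M i j = w j) ∧ ∀ i ∉ I, y i = 0} := by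
  classical
  have hQmem : ∀ x : Fin n → ℝ, x ∈ Q ↔ ∀ i, ∑ j, M i j * x j ≤ b i := by
    intro x; rw [hQ]; exact Iff.rfl
  have hFmem : ∀ x : Fin n → ℝ, x ∈ F ↔ x ∈ Q ∧ ∀ y ∈ Q, ∑ j, w j * y j ≤ ∑ j, w j * x j := by
    intro x; rw [hF]; exact Iff.rfl
  have hImem : ∀ i : Fin m, i ∈ I ↔ ∀ x ∈ F, ∑ j, M i j * x j = b i := by
    intro i; rw [hI]; exact Iff.rfl
  have hdf' : ∀ y : Fin m → ℝ, dualFeas y ↔ (∀ i, 0 ≤ y i) ∧ ∀ j, ∑ i, y i * M i j = w j := by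
    intro y; rw [hdf]
  have hDmem : ∀ y : Fin m → ℝ,
      y ∈ D ↔ dualFeas y ∧ ∀ z, dualFeas z → ∑ i, b i * y i ≤ ∑ i, b i * z i := by
    intro y; rw [hD]; exact Iff.rfl
  obtain ⟨x₀, hx₀F⟩ := hFne
  obtain ⟨hx₀Qmem, hx₀opt⟩ := (hFmem x₀).mp hx₀F
  have hx₀Q : ∀ i, ∑ j, M i j * x₀ j ≤ b i := (hQmem x₀).mp hx₀Qmem
  set γ : ℝ := ∑ j, w j * x₀ j with hγdef
  have hγle : ∀ x : Fin n → ℝ, (∀ i, ∑ j, M i j * x j ≤ b i) → ∑ j, w j * x j ≤ γ := by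
    intro x hx
    exact hx₀opt x ((hQmem x).mpr hx)
  -- strong duality
  obtain ⟨yhat, hyhat0, hyhatw, hyhatle⟩ := affine_farkas M b w γ x₀ hx₀Q hγle
  have hyhatγ : ∑ i, b i * yhat i = γ :=
    le_antisymm hyhatle (weak_duality M b w yhat x₀ hyhat0 hyhatw hx₀Q)
  -- characterization of D
  have hDiff : ∀ y : Fin m → ℝ,
      y ∈ D ↔ ((∀ i, 0 ≤ y i) ∧ ∀ j, ∑ i, y i * M i j = w j) ∧ ∑ i, b i * y i = γ := by
    intro y
    rw [hDmem y, hdf' y]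
    constructor
    · rintro ⟨hf, hopt⟩
      refine ⟨hf, le_antisymm ?_ (weak_duality M b w y x₀ hf.1 hf.2 hx₀Q)⟩
      have := hopt yhat ((hdf' yhat).mpr ⟨hyhat0, hyhatw⟩)
      rw [hyhatγ] at this
      exact this
    · rintro ⟨hf, heq⟩
      refine ⟨hf, fun z hz => ?_⟩
      rw [hdf' z] at hz
      rw [heq]
      exact weak_duality M b w z x₀ hz.1 hz.2 hx₀Q
  have hyhatD : yhat ∈ D := (hDiff yhat).mpr ⟨⟨hyhat0, hyhatw⟩, hyhatγ⟩
  -- properties of optimal primal points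
  have hFchar : ∀ x, x ∈ F → (∀ i, ∑ j, M i j * x j ≤ b i) ∧ ∑ j, w j * x j = γ := by
    intro x hx
    obtain ⟨hxQ, hxopt⟩ := (hFmem x).mp hx
    have hxQ' := (hQmem x).mp hxQ
    exact ⟨hxQ', le_antisymm (hγle x hxQ') (hxopt x₀ hx₀Qmem)⟩
  -- complementary slackness : D ⊆ RHS
  have hDsub : ∀ y ∈ D, (∀ j, ∑ i, y i * M i j = w j) ∧ ∀ i ∉ I, y i = 0 := by
    intro y hyD
    obtain ⟨⟨hy0, hyw⟩, hyγ⟩ := (hDiff y).mp hyD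
    refine ⟨hyw, ?_⟩
    intro i hiI
    rw [hImem i] at hiI
    push_neg at hiI
    obtain ⟨x, hxF, hxne⟩ := hiI
    obtain ⟨hxQ, hxγ⟩ := hFchar x hxF
    have hlt : ∑ j, M i j * x j < b i := lt_of_le_of_ne (hxQ i) hxne
    have hzero : ∑ k, y k * (b k - ∑ j, M k j * x j) = 0 := by
      have h1 : ∑ k, y k * (b k - ∑ j, M k j * x j)
          = ∑ k, b k * y k - ∑ k, y k * ∑ j, M k j * x j := by
        rw [← Finset.sum_sub_distrib]
        exact Finset.sum_congr rfl fun k _ => by ring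
      have h2 : ∑ k, y k * ∑ j, M k j * x j = γ := by
        rw [sum_swap_eq M y x]
        calc ∑ j, (∑ i, y i * M i j) * x j = ∑ j, w j * x j :=
              Finset.sum_congr rfl fun j _ => by rw [hyw j]
          _ = γ := hxγ
      rw [h1, h2, hyγ, sub_self]
    have hnn : ∀ k ∈ Finset.univ, 0 ≤ y k * (b k - ∑ j, M k j * x j) := by
      intro k _
      exact mul_nonneg (hy0 k) (by linarith [hxQ k])
    have heach := (Finset.sum_eq_zero_iff_of_nonneg hnn).mp hzero i (Finset.mem_univ i)
    rcases mul_eq_zero.mp heach with h | h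
    · exact h
    · linarith
  -- strict complementarity
  have hstrict : ∀ i₀ ∈ I, ∃ y, y ∈ D ∧ 0 < y i₀ := by
    intro i₀ hi₀
    set M' : Matrix (Fin (m + 1)) (Fin n) ℝ := fun i =>
      Fin.lastCases (fun j => -(w j)) (fun i' => M i') i with hM'
    set b' : Fin (m + 1) → ℝ := Fin.lastCases (-γ) b with hb'
    have hM'cast : ∀ (i : Fin m) (j : Fin n), M' i.castSucc j = M i j := by
      intro i j; simp [hM']
    have hM'last : ∀ j : Fin n, M' (Fin.last m) j = -(w j) := by
      intro j; simp [hM']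
    have hb'cast : ∀ i : Fin m, b' i.castSucc = b i := by intro i; simp [hb']
    have hb'last : b' (Fin.last m) = -γ := by simp [hb']
    have hx₀feas : ∀ i, ∑ j, M' i j * x₀ j ≤ b' i := by
      intro i
      induction i using Fin.lastCases with
      | last =>
        rw [hb'last]
        have : ∑ j, M' (Fin.last m) j * x₀ j = -∑ j, w j * x₀ j := by
          rw [← Finset.sum_neg_distrib]
          exact Finset.sum_congr rfl fun j _ => by rw [hM'last]; ring
        rw [this, hγdef]
      | cast i =>
        rw [hb'cast]
        calc ∑ j, M' i.castSucc j * x₀ j = ∑ j, M i j * x₀ j :=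
              Finset.sum_congr rfl fun j _ => by rw [hM'cast]
          _ ≤ b i := hx₀Q i
    have hbound : ∀ x : Fin n → ℝ, (∀ i, ∑ j, M' i j * x j ≤ b' i) →
        ∑ j, -(M i₀ j) * x j ≤ -(b i₀) := by
      intro x hx
      have hxQ : ∀ i, ∑ j, M i j * x j ≤ b i := by
        intro i
        have := hx i.castSucc
        rw [hb'cast] at this
        calc ∑ j, M i j * x j = ∑ j, M' i.castSucc j * x j :=
              Finset.sum_congr rfl fun j _ => by rw [hM'cast]
          _ ≤ b i := this
      have hxγ : γ ≤ ∑ j, w j * x j := by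
        have := hx (Fin.last m)
        rw [hb'last] at this
        have h2 : ∑ j, M' (Fin.last m) j * x j = -∑ j, w j * x j := by
          rw [← Finset.sum_neg_distrib]
          exact Finset.sum_congr rfl fun j _ => by rw [hM'last]; ring
        rw [h2] at this
        linarith
      have hxF : x ∈ F := by
        rw [hFmem]
        refine ⟨(hQmem x).mpr hxQ, fun y hy => ?_⟩
        calc ∑ j, w j * y j ≤ γ := hγle y ((hQmem y).mp hy)
          _ ≤ ∑ j, w j * x j := hxγ
      have htight : ∑ j, M i₀ j * x j = b i₀ := (hImem i₀).mp hi₀ x hxF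
      have : ∑ j, -(M i₀ j) * x j = -∑ j, M i₀ j * x j := by
        rw [← Finset.sum_neg_distrib]
        exact Finset.sum_congr rfl fun j _ => by ring
      rw [this, htight]
    obtain ⟨u, hu0, huw, hub⟩ := affine_farkas M' b' (fun j => -(M i₀ j)) (-(b i₀)) x₀ hx₀feas hbound
    set lam : ℝ := u (Fin.last m) with hlam
    set y : Fin m → ℝ := fun i' => u i'.castSucc + (if i' = i₀ then 1 else 0) with hy
    have hy0 : ∀ i, 0 ≤ y i := by
      intro i
      rw [hy]
      dsimp only
      have := hu0 i.castSucc
      split <;> linarith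
    have hyi₀ : 1 ≤ y i₀ := by
      rw [hy]
      dsimp only
      rw [if_pos rfl]
      linarith [hu0 i₀.castSucc]
    have hyw : ∀ j, ∑ i, y i * M i j = lam * w j := by
      intro j
      have hrow := huw j
      rw [Fin.sum_univ_castSucc] at hrow
      have h2 : ∑ i : Fin m, u i.castSucc * M' i.castSucc j = ∑ i : Fin m, u i.castSucc * M i j :=
        Finset.sum_congr rfl fun i _ => by rw [hM'cast]
      rw [h2, hM'last] at hrow
      have h3 : ∑ i, y i * M i j
          = ∑ i : Fin m, u i.castSucc * M i j + ∑ i : Fin m, (if i = i₀ then 1 else 0) * M i j := by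
        rw [← Finset.sum_add_distrib]
        exact Finset.sum_congr rfl fun i _ => by rw [hy]; dsimp only; ring
      have h4 : ∑ i : Fin m, (if i = i₀ then (1:ℝ) else 0) * M i j = M i₀ j := by
        rw [Finset.sum_congr rfl (fun i (_ : i ∈ Finset.univ) =>
          show (if i = i₀ then (1:ℝ) else 0) * M i j = if i = i₀ then M i j else 0 by
            split <;> ring)]
        simp
      rw [h3, h4]
      linarith
    have hyb : ∑ i, b i * y i ≤ lam * γ := by
      have hrow := hub
      rw [Fin.sum_univ_castSucc] at hrow
      have h2 : ∑ i : Fin m, b' i.castSucc * u i.castSucc = ∑ i : Fin m, b i * u i.castSucc :=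
        Finset.sum_congr rfl fun i _ => by rw [hb'cast]
      rw [h2, hb'last] at hrow
      have h3 : ∑ i, b i * y i
          = ∑ i : Fin m, b i * u i.castSucc + ∑ i : Fin m, (if i = i₀ then 1 else 0) * b i := by
        rw [← Finset.sum_add_distrib]
        exact Finset.sum_congr rfl fun i _ => by rw [hy]; dsimp only; ring
      have h4 : ∑ i : Fin m, (if i = i₀ then (1:ℝ) else 0) * b i = b i₀ := by
        rw [Finset.sum_congr rfl (fun i (_ : i ∈ Finset.univ) =>
          show (if i = i₀ then (1:ℝ) else 0) * b i = if i = i₀ then b i else 0 by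
            split <;> ring)]
        simp
      rw [h3, h4]
      linarith
    have hlam0 : 0 ≤ lam := hu0 (Fin.last m)
    rcases lt_or_eq_of_le hlam0 with hlampos | hlameq
    · refine ⟨fun i => y i / lam, ?_, ?_⟩
      · rw [hDiff]
        have hfw : ∀ j, ∑ i, y i / lam * M i j = w j := by
          intro j
          have : ∑ i, y i / lam * M i j = (∑ i, y i * M i j) / lam := by
            rw [Finset.sum_div]
            exact Finset.sum_congr rfl fun i _ => by ring
          rw [this, hyw j, mul_comm, mul_div_assoc, div_self hlampos.ne', mul_one]
        refine ⟨⟨fun i => div_nonneg (hy0 i) hlam0, hfw⟩, ?_⟩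
        have hle : ∑ i, b i * (y i / lam) ≤ γ := by
          have h5 : ∑ i, b i * (y i / lam) = (∑ i, b i * y i) / lam := by
            rw [Finset.sum_div]
            exact Finset.sum_congr rfl fun i _ => by ring
          rw [h5, div_le_iff₀ hlampos]
          linarith [hyb]
        exact le_antisymm hle (weak_duality M b w _ x₀
          (fun i => div_nonneg (hy0 i) hlam0) hfw hx₀Q)
      · exact div_pos (by linarith) hlampos
    · refine ⟨fun i => yhat i + y i, ?_, ?_⟩
      · rw [hDiff]
        have hfw : ∀ j, ∑ i, (yhat i + y i) * M i j = w j := by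
          intro j
          have : ∑ i, (yhat i + y i) * M i j = ∑ i, yhat i * M i j + ∑ i, y i * M i j := by
            rw [← Finset.sum_add_distrib]
            exact Finset.sum_congr rfl fun i _ => by ring
          rw [this, hyhatw j, hyw j, ← hlameq]
          ring
        refine ⟨⟨fun i => add_nonneg (hyhat0 i) (hy0 i), hfw⟩, ?_⟩
        have hle : ∑ i, b i * (yhat i + y i) ≤ γ := by
          have h5 : ∑ i, b i * (yhat i + y i) = ∑ i, b i * yhat i + ∑ i, b i * y i := by
            rw [← Finset.sum_add_distrib]
            exact Finset.sum_congr rfl fun i _ => by ring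
          rw [h5, hyhatγ]
          have := hyb
          rw [← hlameq] at this
          linarith
        exact le_antisymm hle (weak_duality M b w _ x₀
          (fun i => add_nonneg (hyhat0 i) (hy0 i)) hfw hx₀Q)
      · show 0 < yhat i₀ + y i₀
        have := hyhat0 i₀
        linarith
  -- a strictly complementary dual optimum
  obtain ⟨ys, hysD, hyspos⟩ : ∃ ys, ys ∈ D ∧ ∀ i ∈ I, 0 < ys i := by
    choose! f hfD hfpos using hstrict
    set S : Finset (Fin m) := Finset.univ.filter (· ∈ I) with hSdef
    by_cases hS : S.Nonempty
    · set N : ℝ := (S.card : ℝ) with hN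
      have hNpos : 0 < N := by
        rw [hN]
        exact_mod_cast Finset.card_pos.mpr hS
      have hmemI : ∀ i ∈ S, i ∈ I := by
        intro i hi; rw [hSdef, Finset.mem_filter] at hi; exact hi.2
      refine ⟨fun k => (∑ i ∈ S, f i k) / N, ?_, ?_⟩
      · rw [hDiff]
        refine ⟨⟨?_, ?_⟩, ?_⟩
        · intro k
          apply div_nonneg _ hNpos.le
          apply Finset.sum_nonneg
          intro i hi
          exact (((hDiff (f i)).mp (hfD i (hmemI i hi))).1).1 k
        · intro j
          rw [sum_avg_swap S f (fun k => M k j) N]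
          rw [Finset.sum_congr rfl (fun i (hi : i ∈ S) =>
            show ∑ k, f i k * M k j = w j from (((hDiff (f i)).mp (hfD i (hmemI i hi))).1).2 j)]
          rw [Finset.sum_const, nsmul_eq_mul]
          exact mul_div_cancel_left₀ _ hNpos.ne'
        · have h1 : ∑ k, b k * ((∑ i ∈ S, f i k) / N)
              = ∑ k, (∑ i ∈ S, f i k) / N * b k :=
            Finset.sum_congr rfl fun k _ => mul_comm _ _
          rw [h1, sum_avg_swap S f b N]
          rw [Finset.sum_congr rfl (fun i (hi : i ∈ S) =>
            show ∑ k, f i k * b k = γ by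
              rw [Finset.sum_congr rfl fun k (_ : k ∈ Finset.univ) =>
                show f i k * b k = b k * f i k from mul_comm _ _]
              exact ((hDiff (f i)).mp (hfD i (hmemI i hi))).2)]
          rw [Finset.sum_const, nsmul_eq_mul]
          exact mul_div_cancel_left₀ _ hNpos.ne'
      · intro i hi
        have hiS : i ∈ S := by rw [hSdef, Finset.mem_filter]; exact ⟨Finset.mem_univ _, hi⟩
        apply div_pos _ hNpos
        have h1 : f i i ≤ ∑ k ∈ S, f k i := by
          apply Finset.single_le_sum (f := fun k => f k i) _ hiS
          intro k hk
          exact (((hDiff (f k)).mp (hfD k (hmemI k hk))).1).1 i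
        linarith [hfpos i hi]
    · refine ⟨yhat, hyhatD, fun i hi => absurd ?_ hS⟩
      exact ⟨i, by rw [hSdef, Finset.mem_filter]; exact ⟨Finset.mem_univ _, hi⟩⟩
  have hysRHS := hDsub ys hysD
  -- final set equality
  apply Set.eq_of_subset_of_subset
  · -- affineSpan D ⊆ RHS
    let A : AffineSubspace ℝ (Fin m → ℝ) :=
      { carrier := {y | (∀ j, ∑ i, y i * M i j = w j) ∧ ∀ i ∉ I, y i = 0}
        smul_vsub_vadd_mem' := by
          rintro c p₁ p₂ p₃ ⟨h1, h1'⟩ ⟨h2, h2'⟩ ⟨h3, h3'⟩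
          have happ : ∀ i, (c • (p₁ -ᵥ p₂) +ᵥ p₃) i = c * (p₁ i - p₂ i) + p₃ i := by
            intro i; simp [vsub_eq_sub, vadd_eq_add]
          constructor
          · intro j
            rw [Finset.sum_congr rfl fun i (_ : i ∈ Finset.univ) => by rw [happ i]]
            rw [Finset.sum_congr rfl (fun i (_ : i ∈ Finset.univ) =>
              show (c * (p₁ i - p₂ i) + p₃ i) * M i j
                  = (c * (p₁ i * M i j) - c * (p₂ i * M i j)) + p₃ i * M i j by ring)]
            rw [Finset.sum_add_distrib, Finset.sum_sub_distrib, ← Finset.mul_sum, ← Finset.mul_sum,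
              h1 j, h2 j, h3 j]
            ring
          · intro i hi
            rw [happ i, h1' i hi, h2' i hi, h3' i hi]
            ring }
    have hDA : D ⊆ (A : Set (Fin m → ℝ)) := fun y hy => hDsub y hy
    have hle : affineSpan ℝ D ≤ A := affineSpan_le.mpr hDA
    intro y hy
    exact hle hy
  · -- RHS ⊆ affineSpan D
    rintro yv ⟨hyvw, hyvzero⟩
    -- yv has optimal dual objective value
    have hyvγ : ∑ i, b i * yv i = γ := by
      have h1 : ∀ i, b i * yv i = (∑ j, M i j * x₀ j) * yv i := by
        intro i
        by_cases hi : i ∈ I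
        · rw [(hImem i).mp hi x₀ hx₀F]
        · rw [hyvzero i hi]; ring
      rw [Finset.sum_congr rfl fun i (_ : i ∈ Finset.univ) => h1 i]
      have h2 : ∑ i, (∑ j, M i j * x₀ j) * yv i = ∑ i, yv i * ∑ j, M i j * x₀ j :=
        Finset.sum_congr rfl fun i _ => mul_comm _ _
      rw [h2, sum_swap_eq M yv x₀]
      rw [Finset.sum_congr rfl fun j (_ : j ∈ Finset.univ) => by rw [hyvw j]]
    -- choose a small ε
    obtain ⟨ε, hε0, hεle⟩ : ∃ ε : ℝ, 0 < ε ∧ ∀ i ∈ I, ε * |yv i - ys i| ≤ ys i := by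
      set S : Finset (Fin m) := Finset.univ.filter (· ∈ I) with hSdef
      by_cases hS : S.Nonempty
      · refine ⟨min 1 (S.inf' hS fun i => ys i / (|yv i - ys i| + 1)), ?_, ?_⟩
        · apply lt_min one_pos
          rw [Finset.lt_inf'_iff]
          intro i hi
          rw [hSdef, Finset.mem_filter] at hi
          exact div_pos (hyspos i hi.2) (by positivity)
        · intro i hi
          have hiS : i ∈ S := by rw [hSdef, Finset.mem_filter]; exact ⟨Finset.mem_univ _, hi⟩
          have h2 : min 1 (S.inf' hS fun i => ys i / (|yv i - ys i| + 1))
              ≤ ys i / (|yv i - ys i| + 1) :=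
            le_trans (min_le_right _ _) (Finset.inf'_le _ hiS)
          have h3 : (0:ℝ) < |yv i - ys i| + 1 := by positivity
          rw [le_div_iff₀ h3] at h2
          have h4 : (0:ℝ) ≤ min 1 (S.inf' hS fun i => ys i / (|yv i - ys i| + 1)) := by
            apply le_min zero_le_one
            apply Finset.le_inf'
            intro k hk
            rw [hSdef, Finset.mem_filter] at hk
            exact (div_pos (hyspos k hk.2) (by positivity)).le
          nlinarith [abs_nonneg (yv i - ys i)]
      · refine ⟨1, one_pos, fun i hi => absurd ?_ hS⟩
        exact ⟨i, by rw [hSdef, Finset.mem_filter]; exact ⟨Finset.mem_univ _, hi⟩⟩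
    set u : Fin m → ℝ := fun i => ys i + ε * (yv i - ys i) with hu
    have huD : u ∈ D := by
      rw [hDiff]
      refine ⟨⟨?_, ?_⟩, ?_⟩
      · intro i
        by_cases hi : i ∈ I
        · have h2 := hεle i hi
          have h3 := neg_abs_le (yv i - ys i)
          rw [hu]
          dsimp only
          nlinarith
        · rw [hu]
          dsimp only
          rw [hyvzero i hi, hysRHS.2 i hi]
          norm_num
      · intro j
        rw [hu]
        have := sum_affine_comb ε ys yv (fun i => M i j)
        dsimp only at this ⊢
        rw [this, hysRHS.1 j, hyvw j]
        ring
      · rw [hu]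
        have := sum_affine_comb' ε ys yv b
        dsimp only at this ⊢
        rw [this, hyvγ]
        have hysγ : ∑ i, b i * ys i = γ := ((hDiff ys).mp hysD).2
        rw [hysγ]
        ring
    have hysSpan := subset_affineSpan ℝ D hysD
    have huSpan := subset_affineSpan ℝ D huD
    have hmem := AffineSubspace.smul_vsub_vadd_mem (affineSpan ℝ D) ε⁻¹ huSpan hysSpan hysSpan
    have heq : ε⁻¹ • (u -ᵥ ys) +ᵥ ys = yv := by
      funext i
      show ε⁻¹ * (u i - ys i) + ys i = yv i
      rw [hu]
      dsimp only
      field_simp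
      ring
    rwa [heq] at hmem
end

section
/- Let M ∈ ℤ^{m×n}, b ∈ ℤᵐ, and let p be a positive integer. If Q = {x : Mx ≤ b} is an integral polytope and for every row i and every vertex v of Q we have rowᵢ(M)v ≥ bᵢ − p, then for every row i that is not an implicit equality there exists s(i) ∈ {1, …, p} such that Q ∩ {x : rowᵢ(M)x ≤ bᵢ − s(i)} is an integral polyhedron (indeed a face of Q). -/
open Finset

private lemma lin_continuous {n : ℕ} (c : Fin n → ℝ) :
    Continuous (fun x : Fin n → ℝ => ∑ j, c j * x j) :=
  continuous_finset_sum _ fun j _ => continuous_const.mul (continuous_apply j)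

private lemma lin_isLinearMap {n : ℕ} (c : Fin n → ℝ) :
    IsLinearMap ℝ (fun x : Fin n → ℝ => ∑ j, c j * x j) := by
  constructor
  · intro x y
    rw [← Finset.sum_add_distrib]
    exact Finset.sum_congr rfl fun j _ => by simp [mul_add]
  · intro a x
    simp only [smul_eq_mul, Finset.mul_sum, Pi.smul_apply]
    exact Finset.sum_congr rfl fun j _ => by ring

private lemma le_of_extreme_le {n : ℕ} {Q : Set (Fin n → ℝ)} (hcomp : IsCompact Q)
    (hconv : Convex ℝ Q) (c : Fin n → ℝ) (C : ℝ)
    (h : ∀ v ∈ Set.extremePoints ℝ Q, ∑ j, c j * v j ≤ C) :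
    ∀ x ∈ Q, ∑ j, c j * x j ≤ C := by
  intro x hx
  have hsub : Q ⊆ {y | ∑ j, c j * y j ≤ C} := by
    rw [← closure_convexHull_extremePoints hcomp hconv]
    exact closure_minimal (convexHull_min h (convex_halfSpace_le (lin_isLinearMap c) C))
      (isClosed_le (lin_continuous c) continuous_const)
  exact hsub hx

private lemma sum_int_cast {n : ℕ} (c : Fin n → ℤ) (x : Fin n → ℝ) (z : Fin n → ℤ)
    (hz : ∀ j, x j = (z j : ℝ)) :
    ∑ j, (c j : ℝ) * x j = ((∑ j, c j * z j : ℤ) : ℝ) := by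
  push_cast
  exact Finset.sum_congr rfl fun j _ => by rw [hz j]

/-- A set is integral if every nonempty face contains an integer point. -/
def IsIntegralPolyhedron {n : ℕ} (S : Set (Fin n → ℝ)) : Prop :=
  ∀ F, IsFaceOf S F → F.Nonempty → ∃ x ∈ F, ∀ j, ∃ z : ℤ, x j = (z : ℝ)

private lemma extremePoint_integral {m n : ℕ} (M : Matrix (Fin m) (Fin n) ℤ) (b : Fin m → ℤ)
    (Q : Set (Fin n → ℝ)) (hQ : Q = {x | ∀ i, ∑ j, (M i j : ℝ) * x j ≤ (b i : ℝ)})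
    (hIntegral : IsIntegralPolyhedron Q) :
    ∀ v ∈ Set.extremePoints ℝ Q, ∀ j, ∃ z : ℤ, v j = (z : ℝ) := by
  classical
  intro v hv
  have hvQ : v ∈ Q := hv.1
  have hQmem : ∀ x ∈ Q, ∀ i, ∑ j, (M i j : ℝ) * x j ≤ (b i : ℝ) := by
    intro x hx; rw [hQ] at hx; exact hx
  set I : Finset (Fin m) := Finset.univ.filter
    (fun i => ∑ j, (M i j : ℝ) * v j = (b i : ℝ)) with hI
  set c : Fin n → ℝ := fun j => ∑ i ∈ I, (M i j : ℝ) with hc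
  have hswap : ∀ x : Fin n → ℝ, ∑ j, c j * x j = ∑ i ∈ I, ∑ j, (M i j : ℝ) * x j := by
    intro x
    simp only [hc, Finset.sum_mul]
    exact Finset.sum_comm
  have hvF : v ∈ {x ∈ Q | ∀ y ∈ Q, ∑ j, c j * y j ≤ ∑ j, c j * x j} := by
    refine ⟨hvQ, fun y hyQ => ?_⟩
    rw [hswap, hswap]
    refine Finset.sum_le_sum fun i hiI => ?_
    rw [(Finset.mem_filter.mp hiI).2]
    exact hQmem y hyQ i
  obtain ⟨x, hxF, hxint⟩ := hIntegral _ ⟨c, rfl⟩ ⟨v, hvF⟩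
  suffices hxv : x = v by rw [← hxv]; exact hxint
  have hxQ : x ∈ Q := hxF.1
  have hsumeq : ∑ i ∈ I, ∑ j, (M i j : ℝ) * x j = ∑ i ∈ I, (b i : ℝ) := by
    refine le_antisymm (Finset.sum_le_sum fun i _ => hQmem x hxQ i) ?_
    have h1 := hxF.2 v hvQ
    rw [hswap, hswap] at h1
    calc ∑ i ∈ I, (b i : ℝ) = ∑ i ∈ I, ∑ j, (M i j : ℝ) * v j :=
          Finset.sum_congr rfl fun i hi => ((Finset.mem_filter.mp hi).2).symm
      _ ≤ _ := h1
  have htight : ∀ i ∈ I, ∑ j, (M i j : ℝ) * x j = (b i : ℝ) :=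
    (Finset.sum_eq_sum_iff_of_le (fun i _ => hQmem x hxQ i)).mp hsumeq
  by_contra hne
  set S : Finset (Fin m) := Finset.univ.filter
    (fun i => ¬ (∑ j, (M i j : ℝ) * v j = (b i : ℝ))) with hS
  set f : Fin m → ℝ := fun i =>
    ((b i : ℝ) - ∑ j, (M i j : ℝ) * v j) /
      (1 + |(∑ j, (M i j : ℝ) * x j) - ∑ j, (M i j : ℝ) * v j|) with hf
  have hfpos : ∀ i ∈ S, 0 < f i := by
    intro i hi
    have hlt : ∑ j, (M i j : ℝ) * v j < (b i : ℝ) :=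
      lt_of_le_of_ne (hQmem v hvQ i) (Finset.mem_filter.mp hi).2
    exact div_pos (by linarith) (by positivity)
  obtain ⟨ε, hεpos, hεf⟩ : ∃ ε : ℝ, 0 < ε ∧ ∀ i ∈ S, ε ≤ f i := by
    have hTne : (insert (1:ℝ) (S.image f)).Nonempty := ⟨1, Finset.mem_insert_self _ _⟩
    refine ⟨(insert (1:ℝ) (S.image f)).min' hTne, ?_, fun i hi =>
      Finset.min'_le _ _ (Finset.mem_insert_of_mem (Finset.mem_image_of_mem f hi))⟩
    have hmem := (insert (1:ℝ) (S.image f)).min'_mem hTne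
    rw [Finset.mem_insert] at hmem
    rcases hmem with h1 | h2
    · rw [h1]; norm_num
    · obtain ⟨i, hiS, hfi⟩ := Finset.mem_image.mp h2
      rw [← hfi]; exact hfpos i hiS
  set x1 : Fin n → ℝ := fun j => v j + ε * (x j - v j) with hx1
  set x2 : Fin n → ℝ := fun j => v j + (-ε) * (x j - v j) with hx2
  have hrow : ∀ (i : Fin m) (δ : ℝ), ∑ j, (M i j : ℝ) * (v j + δ * (x j - v j))
      = (∑ j, (M i j : ℝ) * v j)
        + δ * ((∑ j, (M i j : ℝ) * x j) - ∑ j, (M i j : ℝ) * v j) := by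
    intro i δ
    rw [mul_sub, Finset.mul_sum, Finset.mul_sum, ← Finset.sum_sub_distrib,
      ← Finset.sum_add_distrib]
    exact Finset.sum_congr rfl fun j _ => by ring
  have hfeas : ∀ (δ : ℝ), |δ| ≤ ε → (fun j => v j + δ * (x j - v j)) ∈ Q := by
    intro δ hδ
    rw [hQ]
    intro i
    show ∑ j, (M i j : ℝ) * (v j + δ * (x j - v j)) ≤ (b i : ℝ)
    rw [hrow i δ]
    by_cases hi : ∑ j, (M i j : ℝ) * v j = (b i : ℝ)
    · have hiI : i ∈ I := Finset.mem_filter.mpr ⟨Finset.mem_univ i, hi⟩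
      rw [htight i hiI, hi]
      simp
    · have hiS : i ∈ S := Finset.mem_filter.mpr ⟨Finset.mem_univ i, hi⟩
      have hεfi := hεf i hiS
      set Δ : ℝ := (∑ j, (M i j : ℝ) * x j) - ∑ j, (M i j : ℝ) * v j with hΔ
      have hden : (0:ℝ) < 1 + |Δ| := by positivity
      have hnum : ε * (1 + |Δ|) ≤ (b i : ℝ) - ∑ j, (M i j : ℝ) * v j := by
        rw [hf] at hεfi
        calc ε * (1 + |Δ|) ≤ f i * (1 + |Δ|) := by nlinarith
          _ = (b i : ℝ) - ∑ j, (M i j : ℝ) * v j := by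
              rw [hf]; field_simp; rfl
      have habs : δ * Δ ≤ |δ| * |Δ| := by
        calc δ * Δ ≤ |δ * Δ| := le_abs_self _
          _ = |δ| * |Δ| := abs_mul _ _
      have : |δ| * |Δ| ≤ ε * (1 + |Δ|) := by nlinarith [abs_nonneg Δ, abs_nonneg δ, hεpos]
      linarith
  have hx1Q : x1 ∈ Q := hfeas ε (by rw [abs_of_pos hεpos])
  have hx2Q : x2 ∈ Q := hfeas (-ε) (by rw [abs_neg, abs_of_pos hεpos])
  have hseg : v ∈ openSegment ℝ x1 x2 := by
    refine ⟨1/2, 1/2, by norm_num, by norm_num, by norm_num, ?_⟩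
    funext j
    simp only [Pi.add_apply, Pi.smul_apply, hx1, hx2, smul_eq_mul]
    ring
  have := hv.2 hx1Q hx2Q hseg
  apply hne
  funext j
  have h1 : x1 j = v j := by rw [this]
  simp only [hx1] at h1
  have : ε * (x j - v j) = 0 := by linarith
  rcases mul_eq_zero.mp this with h | h
  · exact absurd h (ne_of_gt hεpos)
  · linarith

/-- A `p`-small system is `(1/p)`-resilient: if `Q = {x : Mx ≤ b}` is an integral
polytope and every vertex `v` satisfies `rowᵢ(M)v ≥ bᵢ − p` for every row `i`,
then for every row `i` that is not an implicit equality there is `s(i) ∈ {1,…,p}`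
such that `Q ∩ {x : rowᵢ(M)x ≤ bᵢ − s(i)}` is an integral polyhedron, indeed a
face of `Q`. -/
theorem p_small_implies_resilient {m n : ℕ} (M : Matrix (Fin m) (Fin n) ℤ)
    (b : Fin m → ℤ) (p : ℕ) (hp : 0 < p)
    (Q : Set (Fin n → ℝ)) (hQ : Q = {x | ∀ i, ∑ j, (M i j : ℝ) * x j ≤ (b i : ℝ)})
    (hBounded : Bornology.IsBounded Q)
    (hIntegral : IsIntegralPolyhedron Q)
    (hSmall : ∀ i : Fin m, ∀ v ∈ Set.extremePoints ℝ Q,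
      (b i : ℝ) - (p : ℝ) ≤ ∑ j, (M i j : ℝ) * v j) :
    ∀ i : Fin m, (∃ x ∈ Q, ∑ j, (M i j : ℝ) * x j < (b i : ℝ)) →
      ∃ s : ℕ, 1 ≤ s ∧ s ≤ p ∧
        IsFaceOf Q (Q ∩ {x | ∑ j, (M i j : ℝ) * x j ≤ (b i : ℝ) - (s : ℝ)}) ∧
        IsIntegralPolyhedron (Q ∩ {x | ∑ j, (M i j : ℝ) * x j ≤ (b i : ℝ) - (s : ℝ)}) := by
  classical
  intro i hi
  obtain ⟨x₀, hx₀Q, hx₀lt⟩ := hi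
  have hQmem : ∀ x ∈ Q, ∀ i', ∑ j, (M i' j : ℝ) * x j ≤ (b i' : ℝ) := by
    intro x hx; rw [hQ] at hx; exact hx
  -- Q is convex
  have hconv : Convex ℝ Q := by
    rw [hQ]
    intro x hx y hy α β hα hβ hαβ
    simp only [Set.mem_setOf_eq] at hx hy ⊢
    intro i'
    have hlin : ∑ j, (M i' j : ℝ) * (α • x + β • y) j
        = α * (∑ j, (M i' j : ℝ) * x j) + β * (∑ j, (M i' j : ℝ) * y j) := by
      simp only [Pi.add_apply, Pi.smul_apply, smul_eq_mul, Finset.mul_sum,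
        ← Finset.sum_add_distrib]
      exact Finset.sum_congr rfl fun j _ => by ring
    rw [hlin]
    calc α * (∑ j, (M i' j : ℝ) * x j) + β * (∑ j, (M i' j : ℝ) * y j)
        ≤ α * (b i' : ℝ) + β * (b i' : ℝ) := by
          gcongr
          · exact hx i'
          · exact hy i'
      _ = (b i' : ℝ) := by rw [← add_mul, hαβ, one_mul]
  -- Q is closed, hence compact
  have hclosed : IsClosed Q := by
    rw [hQ]
    have heq : {x : Fin n → ℝ | ∀ i', ∑ j, (M i' j : ℝ) * x j ≤ (b i' : ℝ)}
        = ⋂ i', {x : Fin n → ℝ | ∑ j, (M i' j : ℝ) * x j ≤ (b i' : ℝ)} := by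
      ext x; simp [Set.mem_iInter]
    rw [heq]
    exact isClosed_iInter fun i' =>
      isClosed_le (lin_continuous (fun j => (M i' j : ℝ))) continuous_const
  have hcomp : IsCompact Q := Metric.isCompact_of_isClosed_isBounded hclosed hBounded
  -- abbreviation for the negated row
  set a : Fin n → ℝ := fun j => -(M i j : ℝ) with ha
  have hneg : ∀ x : Fin n → ℝ, ∑ j, a j * x j = -∑ j, (M i j : ℝ) * x j := by
    intro x
    rw [← Finset.sum_neg_distrib]
    exact Finset.sum_congr rfl fun j _ => by simp [ha]
  -- the minimum of row i over Q is attained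
  obtain ⟨w, hwQ, hwmin'⟩ := hcomp.exists_isMinOn ⟨x₀, hx₀Q⟩
    (lin_continuous (fun j => (M i j : ℝ))).continuousOn
  have hwmin : ∀ y ∈ Q, ∑ j, (M i j : ℝ) * w j ≤ ∑ j, (M i j : ℝ) * y j :=
    fun y hy => hwmin' hy
  -- the minimizing face contains an integer point z
  have hwF : w ∈ {x ∈ Q | ∀ y ∈ Q, ∑ j, a j * y j ≤ ∑ j, a j * x j} := by
    refine ⟨hwQ, fun y hy => ?_⟩
    rw [hneg, hneg]
    have := hwmin y hy
    linarith
  obtain ⟨z, hzF, hzint⟩ := hIntegral _ ⟨a, rfl⟩ ⟨w, hwF⟩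
  have hzQ : z ∈ Q := hzF.1
  choose zz hzz using hzint
  set k : ℤ := ∑ j, M i j * zz j with hkdef
  have hk : ∑ j, (M i j : ℝ) * z j = (k : ℝ) :=
    sum_int_cast (fun j => M i j) z zz hzz
  have hzmin : ∀ y ∈ Q, (k : ℝ) ≤ ∑ j, (M i j : ℝ) * y j := by
    intro y hy
    have := hzF.2 y hy
    rw [hneg, hneg, hk] at this
    linarith
  -- k < b i
  have hkltR : (k : ℝ) < (b i : ℝ) := lt_of_le_of_lt (hzmin x₀ hx₀Q) hx₀lt
  have hklt : k < b i := by exact_mod_cast hkltR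
  -- b i - p ≤ k
  have hkgeR : (b i : ℝ) - (p : ℝ) ≤ (k : ℝ) := by
    have hext : ∀ v ∈ Set.extremePoints ℝ Q, ∑ j, a j * v j ≤ (p : ℝ) - (b i : ℝ) := by
      intro v hv
      rw [hneg]
      have := hSmall i v hv
      linarith
    have := le_of_extreme_le hcomp hconv a ((p : ℝ) - (b i : ℝ)) hext z hzQ
    rw [hneg, hk] at this
    linarith
  have hkge : (b i : ℤ) - (p : ℤ) ≤ k := by exact_mod_cast hkgeR
  -- the resilience shift
  refine ⟨(b i - k).toNat, by omega, by omega, ?_⟩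
  have hscast : (((b i - k).toNat : ℕ) : ℝ) = (b i : ℝ) - (k : ℝ) := by
    have h0 : ((b i - k).toNat : ℤ) = b i - k := Int.toNat_of_nonneg (by omega)
    calc (((b i - k).toNat : ℕ) : ℝ) = (((b i - k).toNat : ℤ) : ℝ) := by push_cast; ring
      _ = ((b i - k : ℤ) : ℝ) := by rw [h0]
      _ = (b i : ℝ) - (k : ℝ) := by push_cast; ring
  have hbk : (b i : ℝ) - (((b i - k).toNat : ℕ) : ℝ) = (k : ℝ) := by rw [hscast]; ring
  set Fset : Set (Fin n → ℝ) :=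
    Q ∩ {x | ∑ j, (M i j : ℝ) * x j ≤ (b i : ℝ) - (((b i - k).toNat : ℕ) : ℝ)} with hFdef
  have hFmem : ∀ x, x ∈ Fset ↔ x ∈ Q ∧ ∑ j, (M i j : ℝ) * x j ≤ (k : ℝ) := by
    intro x
    rw [hFdef, Set.mem_inter_iff, Set.mem_setOf_eq, hbk]
  have hFeq : Fset = {x ∈ Q | ∀ y ∈ Q, ∑ j, a j * y j ≤ ∑ j, a j * x j} := by
    ext x
    rw [hFmem]
    constructor
    · rintro ⟨hxQ, hxle⟩
      refine ⟨hxQ, fun y hy => ?_⟩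
      rw [hneg, hneg]
      have := hzmin y hy
      linarith
    · rintro ⟨hxQ, hxmax⟩
      refine ⟨hxQ, ?_⟩
      have := hxmax z hzQ
      rw [hneg, hneg, hk] at this
      linarith
  refine ⟨⟨a, hFeq⟩, ?_⟩
  -- integrality of the face
  intro G hGface hGne
  obtain ⟨c, hG⟩ := hGface
  obtain ⟨g, hg⟩ := hGne
  rw [hG] at hg
  have hgF : g ∈ Fset := hg.1
  have hgmax : ∀ y ∈ Fset, ∑ j, c j * y j ≤ ∑ j, c j * g j := hg.2
  have hgQ : g ∈ Q := ((hFmem g).mp hgF).1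
  have hrg : ∑ j, (M i j : ℝ) * g j = (k : ℝ) :=
    le_antisymm ((hFmem g).mp hgF).2 (hzmin g hgQ)
  -- uniform bound on |c ⬝ x| over Q
  obtain ⟨u0, hu0Q, hu0max'⟩ := hcomp.exists_isMaxOn ⟨x₀, hx₀Q⟩
    (continuous_abs.comp (lin_continuous c)).continuousOn
  set C : ℝ := max (|∑ j, c j * u0 j|) 1 with hCdef
  have hC : ∀ x ∈ Q, |∑ j, c j * x j| ≤ C := fun x hx =>
    le_trans (hu0max' hx) (le_max_left _ _)
  have hC1 : (1 : ℝ) ≤ C := le_max_right _ _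
  have hdsum : ∀ (N : ℝ) (x : Fin n → ℝ),
      ∑ j, (N * a j + c j) * x j = N * (∑ j, a j * x j) + ∑ j, c j * x j := by
    intro N x
    rw [Finset.mul_sum, ← Finset.sum_add_distrib]
    exact Finset.sum_congr rfl fun j _ => by ring
  -- the key upper bound on Q, valid for any N ≥ 2C
  have key : ∀ N : ℝ, 2 * C ≤ N → ∀ x ∈ Q,
      N * (∑ j, a j * x j) + ∑ j, c j * x j ≤ N * (-(k : ℝ)) + ∑ j, c j * g j := by
    intro N hN
    have hext : ∀ v ∈ Set.extremePoints ℝ Q,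
        ∑ j, (N * a j + c j) * v j ≤ N * (-(k : ℝ)) + ∑ j, c j * g j := by
      intro v hv
      rw [hdsum]
      have hvQ : v ∈ Q := hv.1
      choose vz hvz using extremePoint_integral M b Q hQ hIntegral v hv
      have hrv : ∑ j, (M i j : ℝ) * v j = ((∑ j, M i j * vz j : ℤ) : ℝ) :=
        sum_int_cast (fun j => M i j) v vz hvz
      have hav : ∑ j, a j * v j = -∑ j, (M i j : ℝ) * v j := hneg v
      have hvcb := abs_le.mp (hC v hvQ)
      have hgcb := abs_le.mp (hC g hgQ)
      by_cases hvk : ∑ j, (M i j : ℝ) * v j = (k : ℝ)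
      · have hvF : v ∈ Fset := (hFmem v).mpr ⟨hvQ, le_of_eq hvk⟩
        have := hgmax v hvF
        rw [hav, hvk]
        linarith
      · -- integer gap: row i of v is at least k + 1
        have hklt2 : k < ∑ j, M i j * vz j := by
          have h1 : (k : ℝ) < ((∑ j, M i j * vz j : ℤ) : ℝ) := by
            rw [← hrv]
            exact lt_of_le_of_ne (hzmin v hvQ) (fun h => hvk h.symm)
          exact_mod_cast h1
        have hgap : (k : ℝ) + 1 ≤ ∑ j, (M i j : ℝ) * v j := by
          rw [hrv]
          have : k + 1 ≤ ∑ j, M i j * vz j := hklt2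
          exact_mod_cast this
        have hNpos : (0 : ℝ) ≤ N := by linarith
        have : N * 1 ≤ N * ((∑ j, (M i j : ℝ) * v j) - (k : ℝ)) := by nlinarith
        rw [hav]
        nlinarith
    intro x hx
    have := le_of_extreme_le hcomp hconv (fun j => N * a j + c j)
      (N * (-(k : ℝ)) + ∑ j, c j * g j) hext x hx
    rw [hdsum] at this
    exact this
  have hag : ∑ j, a j * g j = -(k : ℝ) := by rw [hneg, hrg]
  -- the face of Q defined by 4C·a + c
  have hgG' : g ∈ {x ∈ Q | ∀ y ∈ Q,
      ∑ j, ((4 * C) * a j + c j) * y j ≤ ∑ j, ((4 * C) * a j + c j) * x j} := by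
    refine ⟨hgQ, fun y hy => ?_⟩
    rw [hdsum, hdsum, hag]
    exact key (4 * C) (by linarith) y hy
  obtain ⟨u, huG', huint⟩ := hIntegral _ ⟨fun j => (4 * C) * a j + c j, rfl⟩ ⟨g, hgG'⟩
  have huQ : u ∈ Q := huG'.1
  have hueq : (4 * C) * (∑ j, a j * u j) + ∑ j, c j * u j
      = (4 * C) * (-(k : ℝ)) + ∑ j, c j * g j := by
    refine le_antisymm (key (4 * C) (by linarith) u huQ) ?_
    have := huG'.2 g hgQ
    rw [hdsum, hdsum, hag] at this
    linarith
  have hkey2 := key (2 * C) (by linarith) u huQ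
  have hau : ∑ j, a j * u j = -(k : ℝ) := by
    have hle : ∑ j, a j * u j ≤ -(k : ℝ) := by
      rw [hneg]
      have := hzmin u huQ
      linarith
    have hge : -(k : ℝ) ≤ ∑ j, a j * u j := by nlinarith
    linarith
  have hcu : ∑ j, c j * u j = ∑ j, c j * g j := by
    rw [hau] at hueq
    linarith
  have huF : u ∈ Fset := by
    rw [hFmem]
    refine ⟨huQ, ?_⟩
    rw [hneg] at hau
    linarith
  refine ⟨u, ?_, huint⟩
  rw [hG]
  exact ⟨huF, fun y hy => by rw [hcu]; exact hgmax y hy⟩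
end

section
/- Let 𝕃 ⊆ ℝ be a dense subgroup of (ℝ,+) containing ℤ, and suppose a system of linear equations Ax = b with A ∈ ℤ^{m×n}, b ∈ 𝕃ᵐ has a solution x ∈ ℝⁿ with x ≥ 0 such that every inequality xⱼ ≥ 0 fails to be an implicit equality of the system {Ax = b, x ≥ 0} (i.e., for each j there is a feasible point with xⱼ > 0). Then {x : Ax = b, x ≥ 0} contains a point of 𝕃ⁿ if and only if the affine space {x : Ax = b} contains a point of 𝕃ⁿ. -/
private lemma exists_genInv {m n : ℕ} (A : Matrix (Fin m) (Fin n) ℚ) :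
    ∃ B : Matrix (Fin n) (Fin m) ℚ, A * B * A = A := by
  classical
  set f : (Fin n → ℚ) →ₗ[ℚ] (Fin m → ℚ) := Matrix.toLin' A with hf
  obtain ⟨p, hp⟩ := Submodule.exists_isCompl (LinearMap.range f)
  set π := Submodule.linearProjOfIsCompl _ p hp with hπ
  obtain ⟨s, hs⟩ := f.rangeRestrict.exists_rightInverse_of_surjective (LinearMap.range_rangeRestrict f)
  set g : (Fin m → ℚ) →ₗ[ℚ] (Fin n → ℚ) := s ∘ₗ π with hg
  have key : f ∘ₗ g ∘ₗ f = f := by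
    apply LinearMap.ext
    intro x
    have h1 : π (f x) = ⟨f x, LinearMap.mem_range_self f x⟩ :=
      Submodule.linearProjOfIsCompl_apply_left hp ⟨f x, LinearMap.mem_range_self f x⟩
    have h2 : ∀ r : LinearMap.range f, f (s r) = r := by
      intro r
      have := LinearMap.congr_fun hs r
      simpa [LinearMap.rangeRestrict] using congrArg Subtype.val this
    simp only [LinearMap.comp_apply, hg, LinearMap.coe_comp, Function.comp_apply, h1]
    exact h2 _
  refine ⟨LinearMap.toMatrix' g, ?_⟩
  apply Matrix.toLin'.injective
  rw [Matrix.toLin'_mul, Matrix.toLin'_mul, Matrix.toLin'_toMatrix', ← hf]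
  exact key

private lemma exists_pos_feas {m n : ℕ} (hn : 0 < n)
    (AR : Matrix (Fin m) (Fin n) ℝ) (b : Fin m → ℝ)
    (hnonimpl : ∀ j : Fin n, ∃ x : Fin n → ℝ,
      (∀ i, AR.mulVec x i = b i) ∧ (∀ j', 0 ≤ x j') ∧ 0 < x j) :
    ∃ xhat : Fin n → ℝ, AR.mulVec xhat = b ∧ ∀ i, 0 < xhat i := by
  classical
  choose xs hxs1 hxs2 hxs3 using hnonimpl
  refine ⟨fun i => (n : ℝ)⁻¹ * ∑ j, xs j i, ?_, ?_⟩
  · funext i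
    have step1 : ∀ j, AR i j * ((n : ℝ)⁻¹ * ∑ k, xs k j)
        = (n : ℝ)⁻¹ * ∑ k, AR i j * xs k j := by
      intro j; rw [mul_left_comm, Finset.mul_sum]
    have key : AR.mulVec (fun i' => (n : ℝ)⁻¹ * ∑ j, xs j i') i
        = (n : ℝ)⁻¹ * ∑ k, AR.mulVec (xs k) i := by
      simp only [Matrix.mulVec, dotProduct, step1, ← Finset.mul_sum]
      congr 1
      rw [Finset.sum_comm]
      congr 1; ext j; rw [Finset.mul_sum]
    rw [key]
    simp only [fun k => hxs1 k i]
    rw [Finset.sum_const, Finset.card_univ, Fintype.card_fin, nsmul_eq_mul]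
    field_simp
  · intro i
    have h1 : 0 < ∑ j, xs j i :=
      Finset.sum_pos' (fun j _ => hxs2 j i) ⟨i, Finset.mem_univ i, hxs3 i⟩
    positivity

/-- Density theorem instance: if `𝕃` is a dense additive subgroup of `ℝ` containing
`ℤ`, `A ∈ ℤ^{m×n}`, `b ∈ 𝕃ᵐ`, and `{x : Ax = b, x ≥ 0}` has a point at which no
constraint `xⱼ ≥ 0` is an implicit equality, then `{x : Ax = b, x ≥ 0}` contains a
point of `𝕃ⁿ` iff the affine space `{x : Ax = b}` does. -/
theorem density_nonneg_solutions {m n : ℕ} (𝕃 : Set ℝ)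
    (hsub : ∃ H : AddSubgroup ℝ, (H : Set ℝ) = 𝕃)
    (hdense : Dense 𝕃) (hZ : ∀ z : ℤ, (z : ℝ) ∈ 𝕃)
    (A : Matrix (Fin m) (Fin n) ℤ) (b : Fin m → ℝ) (hb : ∀ i, b i ∈ 𝕃)
    (hfeas : ∃ x : Fin n → ℝ, (∀ i, ∑ j, (A i j : ℝ) * x j = b i) ∧ (∀ j, 0 ≤ x j))
    (hnonimpl : ∀ j : Fin n, ∃ x : Fin n → ℝ,
      (∀ i, ∑ j', (A i j' : ℝ) * x j' = b i) ∧ (∀ j', 0 ≤ x j') ∧ 0 < x j) :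
    (∃ x : Fin n → ℝ, (∀ j, x j ∈ 𝕃) ∧
        (∀ i, ∑ j, (A i j : ℝ) * x j = b i) ∧ (∀ j, 0 ≤ x j)) ↔
      (∃ x : Fin n → ℝ, (∀ j, x j ∈ 𝕃) ∧ ∀ i, ∑ j, (A i j : ℝ) * x j = b i) := by
  classical
  constructor
  · rintro ⟨x, h1, h2, _⟩; exact ⟨x, h1, h2⟩
  rintro ⟨y, hy𝕃, hyeq⟩
  rcases Nat.eq_zero_or_pos n with hn | hn
  · subst hn
    exact ⟨y, hy𝕃, hyeq, fun j => j.elim0⟩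
  obtain ⟨H, rfl⟩ := hsub
  -- matrices
  set AR : Matrix (Fin m) (Fin n) ℝ := Matrix.of fun i j => (A i j : ℝ) with hAR
  set AQ : Matrix (Fin m) (Fin n) ℚ := Matrix.of fun i j => (A i j : ℚ) with hAQ
  have hmv : ∀ (x : Fin n → ℝ) i, AR.mulVec x i = ∑ j, (A i j : ℝ) * x j := by
    intro x i; simp [hAR, Matrix.mulVec, dotProduct]
  have hARQ : AR = AQ.map (Rat.cast : ℚ → ℝ) := by
    ext i j; simp [hAR, hAQ]
  obtain ⟨B, hB⟩ := exists_genInv AQ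
  set Q : Matrix (Fin n) (Fin n) ℚ := 1 - B * AQ with hQ
  have hAQQ : AQ * Q = 0 := by
    rw [hQ, Matrix.mul_sub, Matrix.mul_one, ← Matrix.mul_assoc, hB, sub_self]
  set QR : Matrix (Fin n) (Fin n) ℝ := Q.map (Rat.cast : ℚ → ℝ) with hQR
  set BR : Matrix (Fin n) (Fin m) ℝ := B.map (Rat.cast : ℚ → ℝ) with hBR
  have castmul : ∀ {a b c : ℕ} (M : Matrix (Fin a) (Fin b) ℚ) (N : Matrix (Fin b) (Fin c) ℚ),
      (M * N).map (Rat.cast : ℚ → ℝ) = M.map Rat.cast * N.map Rat.cast := by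
    intro a b c M N
    exact Matrix.map_mul (f := Rat.castHom ℝ)
  have hARQR : AR * QR = 0 := by
    rw [hARQ, hQR]; erw [← castmul AQ Q]; rw [hAQQ]
    ext i j; simp
  have hQRform : QR = 1 - BR * AR := by
    rw [hQR, hQ, hARQ, hBR]; erw [← castmul B AQ]
    ext i j
    by_cases h : i = j <;> simp [Matrix.map_apply, Matrix.one_apply, h]
  have hker : ∀ z : Fin n → ℝ, AR.mulVec z = 0 → QR.mulVec z = z := by
    intro z hz
    rw [hQRform, Matrix.sub_mulVec, Matrix.one_mulVec, ← Matrix.mulVec_mulVec, hz,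
      Matrix.mulVec_zero, sub_zero]
  -- strictly positive feasible point
  obtain ⟨xhat, hxhat_eq, hxhat_pos⟩ := exists_pos_feas hn AR b (by
    intro j
    obtain ⟨x, h1, h2, h3⟩ := hnonimpl j
    exact ⟨x, fun i => (hmv x i).trans (h1 i), h2, h3⟩)
  -- the vector z in the kernel
  have hyv : AR.mulVec y = b := funext fun i => (hmv y i).trans (hyeq i)
  set z : Fin n → ℝ := xhat - y with hzdef
  have hz0 : AR.mulVec z = 0 := by
    rw [hzdef, Matrix.mulVec_sub, hxhat_eq, hyv, sub_self]
  have hzrep : QR.mulVec z = z := hker z hz0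
  -- denominator-cleared columns of Q
  set d : Fin n → ℕ := fun k => ∏ i, (Q i k).den with hd
  have hdpos : ∀ k, 0 < d k := fun k => Finset.prod_pos fun i _ => (Q i k).pos
  set w : Fin n → Fin n → ℝ := fun k i => (d k : ℝ) * ((Q i k : ℚ) : ℝ) with hw
  have hint : ∀ k i, ∃ zz : ℤ, w k i = (zz : ℝ) := by
    intro k i
    obtain ⟨c, hc⟩ : (Q i k).den ∣ d k := Finset.dvd_prod_of_mem _ (Finset.mem_univ i)
    refine ⟨(Q i k).num * c, ?_⟩
    have hq : ((d k : ℕ) : ℚ) * Q i k = ((Q i k).num * c : ℤ) := by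
      rw [hc]
      push_cast
      rw [mul_comm ((Q i k).den : ℚ) (c : ℚ), mul_assoc, mul_comm ((Q i k).den : ℚ),
        Rat.mul_den_eq_num]
      ring
    have : w k i = (((d k : ℕ) : ℚ) * Q i k : ℚ) := by push_cast [hw]; ring
    rw [this, hq]
    push_cast
    ring
  have hwker : ∀ k, AR.mulVec (w k) = 0 := by
    intro k
    funext i'
    have h0 : (AR * QR) i' k = (0 : ℝ) := by rw [hARQR]; simp
    have : AR.mulVec (w k) i' = (d k : ℝ) * (AR * QR) i' k := by
      simp only [Matrix.mulVec, dotProduct, Matrix.mul_apply, hw, Finset.mul_sum]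
      congr 1; ext j
      simp [hQR, Matrix.map_apply]
      ring
    rw [this, h0, mul_zero]
    simp
  -- representation of z
  set t : Fin n → ℝ := fun k => z k / d k with ht
  have hrep2 : ∀ i, z i = ∑ k, t k * w k i := by
    intro i
    have h1 : z i = ∑ k, QR i k * z k := by
      conv_lhs => rw [← hzrep]
      simp [Matrix.mulVec, dotProduct]
    rw [h1]
    congr 1; ext k
    have hdne : (d k : ℝ) ≠ 0 := Nat.cast_ne_zero.mpr (hdpos k).ne'
    rw [ht, hw]
    simp only [hQR, Matrix.map_apply]
    field_simp
  -- epsilon and delta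
  have : Nonempty (Fin n) := ⟨⟨0, hn⟩⟩
  set ε : ℝ := Finset.univ.inf' Finset.univ_nonempty xhat with hε
  have hεpos : 0 < ε := (Finset.lt_inf'_iff _).mpr fun i _ => hxhat_pos i
  have hεle : ∀ i, ε ≤ xhat i := fun i => Finset.inf'_le _ (Finset.mem_univ i)
  set M : ℝ := (∑ k, ∑ i, |w k i|) + 1 with hM
  have hMpos : 0 < M := by positivity
  set δ : ℝ := ε / (2 * M) with hδ
  have hδpos : 0 < δ := by positivity
  have hc : ∀ k, ∃ cc ∈ (H : Set ℝ), |t k - cc| < δ := by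
    intro k
    obtain ⟨cc, hcc1, hcc2⟩ := Metric.mem_closure_iff.mp (hdense (t k)) δ hδpos
    exact ⟨cc, hcc1, by rwa [Real.dist_eq] at hcc2⟩
  choose c hc1 hc2 using hc
  refine ⟨fun i => y i + ∑ k, c k * w k i, ?_, ?_, ?_⟩
  · -- membership in 𝕃
    intro i
    rw [SetLike.mem_coe]
    refine AddSubgroup.add_mem _ (SetLike.mem_coe.mp (hy𝕃 i)) (AddSubgroup.sum_mem _ ?_)
    intro k _
    obtain ⟨zz, hzz⟩ := hint k i
    rw [hzz, mul_comm, ← zsmul_eq_mul]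
    exact AddSubgroup.zsmul_mem _ (SetLike.mem_coe.mp (hc1 k)) zz
  · -- equations
    intro i'
    rw [← hmv]
    have hxdef : (fun i => y i + ∑ k, c k * w k i) = y + ∑ k, c k • w k := by
      funext i
      simp [Finset.sum_apply]
    rw [hxdef, Matrix.mulVec_add]
    have hsum : AR.mulVec (∑ k, c k • w k) = ∑ k, c k • AR.mulVec (w k) := by
      rw [← Matrix.mulVecLin_apply, map_sum]
      simp [Matrix.mulVecLin_apply]
    rw [hsum]
    simp only [hwker, smul_zero, Finset.sum_const_zero, add_zero, hyv]
  · -- nonnegativity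
    intro i
    show 0 ≤ y i + ∑ k, c k * w k i
    have hdiff : (y i + ∑ k, c k * w k i) - xhat i = ∑ k, (c k - t k) * w k i := by
      have hzi : xhat i = z i + y i := by simp [hzdef]
      rw [hzi, hrep2 i]
      simp only [sub_mul, Finset.sum_sub_distrib]
      ring
    have hbound : |∑ k, (c k - t k) * w k i| ≤ δ * M := by
      calc |∑ k, (c k - t k) * w k i| ≤ ∑ k, |(c k - t k) * w k i| := Finset.abs_sum_le_sum_abs _ _
        _ ≤ ∑ k, δ * |w k i| := by
            refine Finset.sum_le_sum fun k _ => ?_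
            rw [abs_mul]
            exact mul_le_mul_of_nonneg_right (le_of_lt (by rw [abs_sub_comm]; exact hc2 k)) (abs_nonneg _)
        _ = δ * ∑ k, |w k i| := by rw [Finset.mul_sum]
        _ ≤ δ * M := by
            refine mul_le_mul_of_nonneg_left ?_ hδpos.le
            rw [hM]
            have : ∑ k, |w k i| ≤ ∑ k, ∑ i', |w k i'| :=
              Finset.sum_le_sum fun k _ =>
                Finset.single_le_sum (fun i' _ => abs_nonneg (w k i')) (Finset.mem_univ i)
            linarith
    have hδM : δ * M = ε / 2 := by
      rw [hδ]
      field_simp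
    have h1 : -(ε / 2) ≤ (y i + ∑ k, c k * w k i) - xhat i := by
      rw [hdiff]
      have := (abs_le.mp (hδM ▸ hbound)).1
      linarith
    have := hεle i
    linarith
end
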